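/- arXiv:2103.06614 — 5 statements merged into one kernel-verified Lean document; each statement's English description precedes it below -/
import Mathlib

section
/- Let G be a connected graph, let v be a cut vertex of G, and let V be the vertex set of a connected component of G ∖ {v}. Let H be a connected graph. If H is a topological minor of G, and for every leaf block B of the block-cut tree of H, B is not a topological minor of G[V ∪ {v}], then H is a topological minor of G ∖ V. -/
/-- `H` is a topological minor of `G`. -/
def TopMinorOf {V W : Type} (H : SimpleGraph V) (G : SimpleGraph W) : Prop :=
  ∃ (φ : V → W) (σ : ∀ ⦃x y : V⦄, H.Adj x y → G.Walk (φ x) (φ y)),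
    Function.Injective φ ∧
    (∀ ⦃x y : V⦄ (h : H.Adj x y), (σ h).IsPath) ∧
    (∀ ⦃x y x' y' : V⦄ (h : H.Adj x y) (h' : H.Adj x' y'),
      s(x, y) ≠ s(x', y') →
      ∀ w, w ∈ (σ h).support → w ∈ (σ h').support →
        (w = φ x ∨ w = φ y) ∧ (w = φ x' ∨ w = φ y'))

/-- `v` is a cut vertex of `G`: deleting it increases the number of connected
components. -/
def IsCutVertex {V : Type} (G : SimpleGraph V) (v : V) : Prop :=
  Nat.card G.ConnectedComponent < Nat.card (G.induce {u | u ≠ v}).ConnectedComponent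

/-- A graph is biconnected if it is connected, has at least two vertices, and stays
connected after deleting any single vertex (`K₂` counts as biconnected). -/
def IsBiconnected {V : Type} (G : SimpleGraph V) : Prop :=
  G.Connected ∧ 2 ≤ Nat.card V ∧ ∀ v : V, (G.induce {u | u ≠ v}).Connected

/-- `B` is (the vertex set of) a block of `G`: a maximal biconnected subgraph.
(Blocks are induced subgraphs, so we identify them with their vertex sets.) -/
def IsBlockSet {V : Type} (G : SimpleGraph V) (B : Set V) : Prop :=
  IsBiconnected (G.induce B) ∧
    ∀ B' : Set V, B ⊆ B' → IsBiconnected (G.induce B') → B' = B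

/-- `B` is a leaf block of the block-cut tree of `G`: a block containing at most one
cut vertex of `G`. -/
def IsLeafBlock {V : Type} (G : SimpleGraph V) (B : Set V) : Prop :=
  IsBlockSet G B ∧ {c : V | IsCutVertex G c ∧ c ∈ B}.ncard ≤ 1

open SimpleGraph

variable {V : Type} {G : SimpleGraph V} {X : Set V}

/-- Restrict a walk whose support lies in `X` to the induced subgraph on `X`. -/
def restrictWalk : ∀ {a b : V} (w : G.Walk a b) (hw : ∀ z ∈ w.support, z ∈ X),
    (G.induce X).Walk ⟨a, hw a w.start_mem_support⟩ ⟨b, hw b w.end_mem_support⟩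
  | _, _, SimpleGraph.Walk.nil, _ => SimpleGraph.Walk.nil
  | a, b, SimpleGraph.Walk.cons h p, hw =>
      SimpleGraph.Walk.cons (by exact h)
        (restrictWalk p (fun z hz => hw z (List.mem_cons_of_mem _ hz)))

lemma restrictWalk_support : ∀ {a b : V} (w : G.Walk a b) (hw : ∀ z ∈ w.support, z ∈ X),
    (restrictWalk w hw).support.map Subtype.val = w.support
  | _, _, SimpleGraph.Walk.nil, _ => rfl
  | a, b, SimpleGraph.Walk.cons h p, hw => by
      simp only [restrictWalk, SimpleGraph.Walk.support_cons, List.map_cons]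
      exact congrArg _ (restrictWalk_support p _)

lemma restrictWalk_isPath {a b : V} (w : G.Walk a b) (hw : ∀ z ∈ w.support, z ∈ X)
    (hp : w.IsPath) : (restrictWalk w hw).IsPath := by
  rw [SimpleGraph.Walk.isPath_def] at hp ⊢
  have := restrictWalk_support w hw
  rw [← this] at hp
  exact hp.of_map

lemma restrictWalk_mem {a b : V} (w : G.Walk a b) (hw : ∀ z ∈ w.support, z ∈ X)
    {z : X} (hz : z ∈ (restrictWalk w hw).support) : (z : V) ∈ w.support := by
  rw [← restrictWalk_support w hw]
  exact List.mem_map_of_mem hz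

/-- Map a walk in an induced subgraph down to the ambient graph. -/
def walkOfInduce : ∀ {a b : X}, (G.induce X).Walk a b → G.Walk a b
  | _, _, SimpleGraph.Walk.nil => SimpleGraph.Walk.nil
  | _, _, SimpleGraph.Walk.cons h p => SimpleGraph.Walk.cons h (walkOfInduce p)

lemma walkOfInduce_support : ∀ {a b : X} (w : (G.induce X).Walk a b),
    (walkOfInduce w).support = w.support.map Subtype.val
  | _, _, SimpleGraph.Walk.nil => rfl
  | _, _, SimpleGraph.Walk.cons h p => by
      simp only [walkOfInduce, SimpleGraph.Walk.support_cons, List.map_cons]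
      exact congrArg _ (walkOfInduce_support p)

section walks
variable {V : Type} {G : SimpleGraph V} {Vs : Set V} {v : V}
  (hVv : ∀ u ∈ Vs, u ≠ v)
  (hVcomp : ∀ u ∈ Vs, ∀ w, w ∉ Vs → w ≠ v → ¬ G.Adj u w)

include hVcomp in
/-- Lemma A: a walk starting in `Vs` avoiding `v` stays in `Vs`. -/
lemma lemA : ∀ {a b : V} (w : G.Walk a b), a ∈ Vs → v ∉ w.support →
    ∀ z ∈ w.support, z ∈ Vs := by
  intro a b w
  induction w with
  | nil => intro ha _ z hz; simp only [Walk.support_nil, List.mem_singleton] at hz; subst hz; exact ha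
  | @cons a a₂ b h p ih =>
    intro ha hv z hz
    simp only [Walk.support_cons, List.mem_cons] at hz hv
    push_neg at hv
    have ha₂ : a₂ ∈ Vs := by
      by_contra hc
      exact hVcomp a ha a₂ hc (fun he => hv.2 (he ▸ p.start_mem_support)) h
    rcases hz with rfl | hz
    · exact ha
    · exact ih ha₂ hv.2 z hz

include hVcomp in
/-- Lemma A': a path from `Vs` to `v` stays in `Vs ∪ {v}`. -/
lemma lemA' : ∀ {a b : V} (w : G.Walk a b), a ∈ Vs → b = v → w.IsPath →
    ∀ z ∈ w.support, z ∈ Vs ∪ {v} := by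
  intro a b w
  induction w with
  | nil =>
    intro ha hb _ z hz
    simp only [Walk.support_nil, List.mem_singleton] at hz
    exact Or.inl (hz ▸ ha)
  | @cons a a₂ b h p ih =>
    intro ha hb hp z hz
    rw [Walk.cons_isPath_iff] at hp
    simp only [Walk.support_cons, List.mem_cons] at hz
    rcases hz with rfl | hz
    · exact Or.inl ha
    · by_cases ha₂ : a₂ ∈ Vs
      · exact ih ha₂ hb hp.1 z hz
      · have ha2v : a₂ = v := by
          by_contra hc
          exact hVcomp a ha a₂ ha₂ hc h
        cases p with
        | nil =>
          simp only [Walk.support_nil, List.mem_singleton] at hz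
          exact Or.inr (hz ▸ (ha2v ▸ rfl))
        | @cons _ c _ h' q =>
          rw [Walk.cons_isPath_iff] at hp
          exfalso
          have : a₂ = b := ha2v.trans hb.symm
          exact hp.1.2 (this ▸ q.end_mem_support)

include hVv hVcomp in
/-- Lemma D: a path with both endpoints in `Vs ∪ {v}` stays in `Vs ∪ {v}`. -/
lemma lemD {a b : V} (w : G.Walk a b) (ha : a ∈ Vs ∪ {v}) (hb : b ∈ Vs ∪ {v})
    (hp : w.IsPath) : ∀ z ∈ w.support, z ∈ Vs ∪ {v} := by
  classical
  rcases ha with ha | ha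
  · rcases hb with hb | hb
    · -- both in Vs
      by_cases hv : v ∈ w.support
      · intro z hz
        have hsp := w.take_spec hv
        have h1 : ∀ z ∈ (w.takeUntil v hv).support, z ∈ Vs ∪ {v} :=
          lemA' hVcomp _ ha rfl (hp.takeUntil hv)
        have h2 : ∀ z ∈ (w.dropUntil v hv).support, z ∈ Vs ∪ {v} := by
          intro z hz
          have := lemA' hVcomp (w.dropUntil v hv).reverse hb rfl
            ((hp.dropUntil hv).reverse) z (by rwa [Walk.support_reverse, List.mem_reverse])
          exact this
        have : z ∈ (w.takeUntil v hv).support ∨ z ∈ (w.dropUntil v hv).support := by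
          rw [← hsp, Walk.mem_support_append_iff] at hz
          exact hz
        rcases this with h | h
        · exact h1 z h
        · exact h2 z h
      · intro z hz; exact Or.inl (lemA hVcomp w ha hv z hz)
    · simp only [Set.mem_singleton_iff] at hb
      subst hb
      exact lemA' hVcomp w ha rfl hp
  · simp only [Set.mem_singleton_iff] at ha
    subst ha
    intro z hz
    rcases hb with hb | hb
    · have := lemA' hVcomp w.reverse hb rfl hp.reverse z
        (by rwa [Walk.support_reverse, List.mem_reverse])
      exact this
    · simp only [Set.mem_singleton_iff] at hb
      -- path from v to v is nil
      cases w with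
      | nil => simp only [Walk.support_nil, List.mem_singleton] at hz; exact Or.inr hz
      | @cons _ c _ h q =>
        rw [Walk.cons_isPath_iff] at hp
        exfalso
        exact hp.2 (hb ▸ q.end_mem_support)

include hVv hVcomp in
/-- Lemma B: a path with both endpoints outside `Vs` avoids `Vs`. -/
lemma lemB {a b : V} (w : G.Walk a b) (ha : a ∉ Vs) (hb : b ∉ Vs)
    (hp : w.IsPath) : ∀ z ∈ w.support, z ∉ Vs := by
  classical
  intro z hz hzVs
  have hv1 : v ∈ (w.takeUntil z hz).support := by
    by_contra hc
    have : v ∈ (w.takeUntil z hz).reverse.support → False := by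
      rw [Walk.support_reverse, List.mem_reverse]; exact hc
    apply ha
    exact lemA hVcomp (w.takeUntil z hz).reverse hzVs this _
      (w.takeUntil z hz).reverse.end_mem_support
  have hv2 : v ∈ (w.dropUntil z hz).support := by
    by_contra hc
    exact hb (lemA hVcomp (w.dropUntil z hz) hzVs hc _ (w.dropUntil z hz).end_mem_support)
  -- v appears in both pieces of the path: contradiction
  have hsp := w.take_spec hz
  have hnd : w.support.Nodup := hp.support_nodup
  rw [← hsp, Walk.support_append, List.nodup_append] at hnd
  rcases (by rw [Walk.support_eq_cons (w.dropUntil z hz)] at hv2; exact List.mem_cons.mp hv2 :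
      v = z ∨ v ∈ (w.dropUntil z hz).support.tail) with h | h
  · exact hVv z hzVs h.symm
  · exact hnd.2.2 v hv1 v h rfl

end walks

section comb
variable {VH : Type} [Fintype VH] {H : SimpleGraph VH}

lemma avoidT {T : Set VH} {t : VH} (ht : t ∈ T)
    (hpend : ∀ x ∈ T, ∀ y, y ∉ T → H.Adj x y → x = t) :
    ∀ {u b : VH} (p : H.Walk u b), b = t → u ∉ T →
      ∃ q : H.Walk u b, ∀ z ∈ q.support, z ∈ T → z = t := by
  intro u b p
  induction p with
  | nil => intro hb hu; exact absurd (hb ▸ ht) hu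
  | @cons a a₂ b h p ih =>
    intro hb hu
    by_cases ha₂ : a₂ ∈ T
    · have h2t : a₂ = t := hpend a₂ ha₂ a hu h.symm
      have h2b : a₂ = b := h2t.trans hb.symm
      subst h2b
      refine ⟨SimpleGraph.Walk.cons h SimpleGraph.Walk.nil, ?_⟩
      intro z hz hzT
      simp only [SimpleGraph.Walk.support_cons, SimpleGraph.Walk.support_nil,
        List.mem_cons, List.mem_singleton] at hz
      rcases hz with rfl | hz
      · exact absurd hzT hu
      · rcases hz with rfl | hz
        · exact h2t
        · exact absurd hz List.not_mem_nil
    · obtain ⟨q, hq⟩ := ih hb ha₂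
      refine ⟨SimpleGraph.Walk.cons h q, ?_⟩
      intro z hz hzT
      simp only [SimpleGraph.Walk.support_cons, List.mem_cons] at hz
      rcases hz with rfl | hz
      · exact absurd hzT hu
      · exact hq z hz hzT

lemma crossT {T : Set VH} {t : VH}
    (hpend : ∀ x ∈ T, ∀ y, y ∉ T → H.Adj x y → x = t) :
    ∀ {a b : VH} (p : H.Walk a b), a ∈ T → b ∉ T → t ∈ p.support := by
  intro a b p
  induction p with
  | nil => intro ha hb; exact absurd ha hb
  | @cons a a₂ b h p ih =>
    intro ha hb
    simp only [SimpleGraph.Walk.support_cons, List.mem_cons]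
    by_cases ha₂ : a₂ ∈ T
    · exact Or.inr (ih ha₂ hb)
    · exact Or.inl (hpend a ha a₂ ha₂ h).symm

/-- A single edge spans a biconnected induced subgraph. -/
lemma pair_bicon {u w : VH} (h : H.Adj u w) : IsBiconnected (H.induce {u, w}) := by
  have hne := h.ne
  have hmem : ∀ x : ({u, w} : Set VH), (x : VH) = u ∨ (x : VH) = w := fun x => x.2
  have hadj : (H.induce {u, w}).Adj ⟨u, Or.inl rfl⟩ ⟨w, Or.inr rfl⟩ := by
    show H.Adj u w; exact h
  refine ⟨⟨fun a b => ?_⟩, ?_, fun z => ?_⟩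
  · have key : ∀ x : ({u, w} : Set VH), x = ⟨u, Or.inl rfl⟩ ∨ x = ⟨w, Or.inr rfl⟩ := by
      intro x; rcases hmem x with hx | hx
      · exact Or.inl (Subtype.ext hx)
      · exact Or.inr (Subtype.ext hx)
    rcases key a with rfl | rfl <;> rcases key b with rfl | rfl
    · rfl
    · exact hadj.reachable
    · exact hadj.symm.reachable
    · rfl
  · rw [Nat.card_coe_set_eq, Set.ncard_pair hne]
  · -- after deleting any vertex, at most one vertex remains
    have hsub : ∀ x y : {a : ({u, w} : Set VH) // a ∈ {b | b ≠ z}}, x = y := by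
      intro x y
      apply Subtype.ext; apply Subtype.ext
      rcases hmem x.1 with hx | hx <;> rcases hmem y.1 with hy | hy
      · exact hx.trans hy.symm
      · -- x = u, y = w; z must differ from both, impossible since z ∈ {u,w}
        exfalso
        rcases hmem z with hz | hz
        · exact x.2 (Subtype.ext (hx.trans hz.symm))
        · exact y.2 (Subtype.ext (hy.trans hz.symm))
      · exfalso
        rcases hmem z with hz | hz
        · exact y.2 (Subtype.ext (hy.trans hz.symm))
        · exact x.2 (Subtype.ext (hx.trans hz.symm))
      · exact hx.trans hy.symm
    rw [SimpleGraph.connected_iff]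
    refine ⟨fun a b => by rw [hsub a b], ?_⟩
    rcases hmem z with hz | hz
    · refine ⟨⟨⟨w, Or.inr rfl⟩, fun he => hne ?_⟩⟩
      have : w = (z : VH) := congrArg Subtype.val he
      exact (this.trans hz).symm
    · refine ⟨⟨⟨u, Or.inl rfl⟩, fun he => hne ?_⟩⟩
      have : u = (z : VH) := congrArg Subtype.val he
      exact this.trans hz


/-- Every biconnected vertex set extends to a block. -/
lemma exists_block (A : Set VH) (hA : IsBiconnected (H.induce A)) :
    ∃ B, A ⊆ B ∧ IsBlockSet H B := by
  classical
  set s : Set (Set VH) := {B | A ⊆ B ∧ IsBiconnected (H.induce B)} with hs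
  have hfin : s.Finite := Set.toFinite s
  have hne : s.Nonempty := ⟨A, subset_refl A, hA⟩
  obtain ⟨B, hBs, hBmax⟩ := Set.Finite.exists_maximalFor Set.ncard s hfin hne
  refine ⟨B, hBs.1, hBs.2, ?_⟩
  intro B' hBB' hB'
  have hB's : B' ∈ s := ⟨hBs.1.trans hBB', hB'⟩
  have hle : B.ncard ≤ B'.ncard := Set.ncard_le_ncard hBB' (Set.toFinite B')
  have := hBmax hB's hle
  exact (Set.eq_of_subset_of_ncard_le hBB' this.ge (Set.toFinite B')).symm

lemma leafBlock_of_pendant (hH : H.Connected) :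
    ∀ (n : ℕ) (T : Set VH) (t : VH), T.ncard ≤ n → t ∈ T → (T \ {t}).Nonempty →
    (∀ x ∈ T, ∀ y, y ∉ T → H.Adj x y → x = t) →
    ∃ B, B ⊆ T ∧ IsLeafBlock H B := by
  classical
  intro n
  induction n with
  | zero =>
    intro T t hcard ht _ _
    have := (Set.ncard_pos (Set.toFinite T)).mpr ⟨t, ht⟩
    omega
  | succ n ih =>
    intro T t hcard ht hne hpend
    by_cases hcut : ∃ c ∈ T, c ≠ t ∧ IsCutVertex H c
    · obtain ⟨c, hcT, hct, hcutc⟩ := hcut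
      set Xc : Set VH := {u | u ≠ c} with hXc
      haveI : Finite (H.induce Xc).ConnectedComponent :=
        Finite.of_surjective (H.induce Xc).connectedComponentMk
          (fun x => x.exists_rep)
      haveI : Finite H.ConnectedComponent :=
        Finite.of_surjective H.connectedComponentMk (fun x => x.exists_rep)
      haveI hnct : Nonempty H.ConnectedComponent := ⟨H.connectedComponentMk t⟩
      have h2 : Nontrivial ((H.induce Xc).ConnectedComponent) := by
        rw [← Finite.one_lt_card_iff_nontrivial]
        have h0 : 0 < Nat.card H.ConnectedComponent := Nat.card_pos
        exact lt_of_le_of_lt h0 hcutc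
      -- every vertex outside T reaches t in H - c
      have htc : t ∈ Xc := fun he => hct he.symm  -- t ≠ c
      have houts : ∀ u (hu : u ∉ T) (huc : u ∈ Xc),
          (H.induce Xc).connectedComponentMk ⟨u, huc⟩
            = (H.induce Xc).connectedComponentMk ⟨t, htc⟩ := by
        intro u hu huc
        obtain ⟨p⟩ := hH.preconnected u t
        obtain ⟨q, hq⟩ := avoidT ht hpend p rfl hu
        have hsup : ∀ z ∈ q.support, z ∈ Xc := by
          intro z hz he
          have : z ∈ T := (he ▸ hcT : z ∈ T)
          exact hct (by rw [← he]; exact hq z hz this)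
        exact SimpleGraph.ConnectedComponent.sound ⟨restrictWalk q hsup⟩
      -- pick a component different from that of t
      obtain ⟨C₁, C₂, hC⟩ := h2
      have hzex : ∃ z : Xc, (H.induce Xc).connectedComponentMk z
          ≠ (H.induce Xc).connectedComponentMk ⟨t, htc⟩ := by
        by_contra hall
        push_neg at hall
        obtain ⟨z₁, rfl⟩ := C₁.exists_rep
        obtain ⟨z₂, rfl⟩ := C₂.exists_rep
        exact hC ((hall z₁).trans (hall z₂).symm)
      obtain ⟨z, hz⟩ := hzex
      set K : Set VH := {x | ∃ hx : x ∈ Xc,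
        (H.induce Xc).connectedComponentMk ⟨x, hx⟩
          = (H.induce Xc).connectedComponentMk z} with hK
      set T' : Set VH := insert c K with hT'
      have hKT : ∀ x ∈ K, x ∈ T := by
        intro x ⟨hx1, hx2⟩
        by_contra hxT
        exact hz ((hx2.symm.trans (houts x hxT hx1)))
      have hT'T : T' ⊆ T := by
        intro x hx
        rcases hx with rfl | hx
        · exact hcT
        · exact hKT x hx
      have htT' : t ∉ T' := by
        intro hx
        rcases hx with he | hx
        · exact hct he.symm
        · obtain ⟨h1, h2'⟩ := hx
          exact hz (h2'.symm)
      have hss : T' ⊂ T := ⟨hT'T, fun hsub => htT' (hsub ht)⟩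
      have hcard' : T'.ncard ≤ n := by
        have := Set.ncard_lt_ncard hss (Set.toFinite T)
        omega
      have hcT' : c ∈ T' := Or.inl rfl
      have hneK : (T' \ {c}).Nonempty := by
        exact ⟨(z : VH), ⟨Or.inr ⟨z.2, rfl⟩, fun he => z.2 he⟩⟩
      have hpend' : ∀ x ∈ T', ∀ y, y ∉ T' → H.Adj x y → x = c := by
        intro x hx y hy hadj
        by_contra hxc
        have hxK : x ∈ K := hx.resolve_left hxc
        obtain ⟨hx1, hx2⟩ := hxK
        have hyc : y ∈ Xc := fun he => hy (Or.inl he)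
        have : (H.induce Xc).connectedComponentMk ⟨y, hyc⟩
            = (H.induce Xc).connectedComponentMk z := by
          refine Eq.trans ?_ hx2
          exact SimpleGraph.ConnectedComponent.sound
            (SimpleGraph.Adj.reachable (by exact hadj.symm))
        exact hy (Or.inr ⟨hyc, this⟩)
      obtain ⟨B, hBT', hB⟩ := ih T' c hcard' hcT' hneK hpend'
      exact ⟨B, hBT'.trans hT'T, hB⟩
    · push_neg at hcut
      obtain ⟨u, huT⟩ := hne
      have hut : u ≠ t := by
        intro he; exact (Set.mem_diff u).mp huT |>.2 (by simp [he])
      have huT' : u ∈ T := ((Set.mem_diff u).mp huT).1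
      -- u has a neighbor
      have hadj : ∃ w, H.Adj u w := by
        obtain ⟨p⟩ := hH.preconnected u t
        cases p with
        | nil => exact absurd rfl hut
        | cons h q => exact ⟨_, h⟩
      obtain ⟨w, hw⟩ := hadj
      have hwT : w ∈ T := by
        by_contra hc
        exact hut (hpend u huT' w hc hw)
      obtain ⟨B, hsubB, hblock⟩ := exists_block {u, w} (pair_bicon hw)
      have hBT : B ⊆ T := by
        intro zz hzB
        by_contra hzT
        have huB : u ∈ B := hsubB (Or.inl rfl)
        have hex : ∃ p : H.Walk u zz, (∀ x ∈ p.support, x ∈ B) ∧ t ∉ p.support := by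
          by_cases htB : t ∈ B
          · have hconn := hblock.1.2.2 ⟨t, htB⟩
            have hu0 : (⟨u, huB⟩ : B) ∈ {x : B | x ≠ ⟨t, htB⟩} :=
              fun he => hut (congrArg Subtype.val he)
            have hz0 : (⟨zz, hzB⟩ : B) ∈ {x : B | x ≠ ⟨t, htB⟩} :=
              fun he => hzT (by rw [show zz = t from congrArg Subtype.val he]; exact ht)
            obtain ⟨W⟩ := hconn.preconnected ⟨⟨u, huB⟩, hu0⟩ ⟨⟨zz, hzB⟩, hz0⟩
            refine ⟨walkOfInduce (walkOfInduce W), ?_, ?_⟩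
            · intro x hx
              rw [walkOfInduce_support] at hx
              obtain ⟨x₁, hx₁, rfl⟩ := List.mem_map.mp hx
              exact x₁.2
            · intro hx
              rw [walkOfInduce_support] at hx
              obtain ⟨x₁, hx₁, hx₁e⟩ := List.mem_map.mp hx
              rw [walkOfInduce_support] at hx₁
              obtain ⟨x₂, hx₂, hx₂e⟩ := List.mem_map.mp hx₁
              exact x₂.2 (Subtype.ext (by rw [hx₂e]; exact hx₁e))
          · obtain ⟨W⟩ := hblock.1.1.preconnected ⟨u, huB⟩ ⟨zz, hzB⟩
            refine ⟨walkOfInduce W, ?_, ?_⟩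
            · intro x hx
              rw [walkOfInduce_support] at hx
              obtain ⟨x₁, hx₁, rfl⟩ := List.mem_map.mp hx
              exact x₁.2
            · intro hx
              rw [walkOfInduce_support] at hx
              obtain ⟨x₁, hx₁, rfl⟩ := List.mem_map.mp hx
              exact htB x₁.2
        obtain ⟨p, hpB, hpt⟩ := hex
        exact hpt (crossT hpend p huT' hzT)
      refine ⟨B, hBT, hblock, ?_⟩
      have hsub1 : {c : VH | IsCutVertex H c ∧ c ∈ B} ⊆ {t} := by
        intro c ⟨hc1, hc2⟩
        by_contra hct
        exact hcut c (hBT hc2) hct hc1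
      calc {c : VH | IsCutVertex H c ∧ c ∈ B}.ncard ≤ ({t} : Set VH).ncard :=
            Set.ncard_le_ncard hsub1 (Set.toFinite _)
        _ = 1 := Set.ncard_singleton t

end comb

section helper
variable {VH VG : Type}

/-- If a leaf-block candidate set `B` maps into `Vs` except possibly one special vertex
`y₀`, the induced subgraph embeds into `G[Vs ∪ {v}]`. -/
lemma helperE [DecidableEq VG] (H : SimpleGraph VH) (G : SimpleGraph VG) (Vs : Set VG) (v : VG)
    (hvVs : v ∉ Vs)
    (φ : VH → VG) (σ : ∀ ⦃x y : VH⦄, H.Adj x y → G.Walk (φ x) (φ y))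
    (hinj : Function.Injective φ)
    (hpath : ∀ ⦃x y : VH⦄ (h : H.Adj x y), (σ h).IsPath)
    (hdisj : ∀ ⦃x y x' y' : VH⦄ (h : H.Adj x y) (h' : H.Adj x' y'),
      s(x, y) ≠ s(x', y') →
      ∀ w, w ∈ (σ h).support → w ∈ (σ h').support →
        (w = φ x ∨ w = φ y) ∧ (w = φ x' ∨ w = φ y'))
    (hD : ∀ ⦃x y : VH⦄ (h : H.Adj x y), φ x ∈ Vs → φ y ∈ Vs →
      ∀ z ∈ (σ h).support, z ∈ Vs ∪ {v})
    (hcrossv : ∀ ⦃x y : VH⦄ (h : H.Adj x y), φ x ∈ Vs → φ y ∉ Vs → v ∈ (σ h).support)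
    (htrunc : ∀ ⦃x y : VH⦄ (h : H.Adj x y) (hm : v ∈ (σ h).support), φ x ∈ Vs →
      ∀ z ∈ ((σ h).takeUntil v hm).support, z ∈ Vs ∪ {v})
    (B : Set VH) (y₀ : VH) (hB : ∀ x ∈ B, φ x ∈ Vs ∨ x = y₀) :
    TopMinorOf (H.induce B) (G.induce (Vs ∪ {v})) := by
  classical
  set φ' : B → (Vs ∪ {v} : Set VG) := fun x =>
    if h : φ (x : VH) ∈ Vs then ⟨φ (x : VH), Or.inl h⟩ else ⟨v, Or.inr rfl⟩ with hφ'
  have hφ'1 : ∀ (x : B) (h : φ (x : VH) ∈ Vs), (φ' x : VG) = φ (x : VH) := by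
    intro x h; simp only [hφ', dif_pos h]
  have hφ'2 : ∀ (x : B) (h : φ (x : VH) ∉ Vs), (φ' x : VG) = v := by
    intro x h; simp only [hφ', dif_neg h]
  have key2 : ∀ (c : B) (w : (Vs ∪ {v} : Set VG)), (w : VG) = φ (c : VH) → w = φ' c := by
    intro c w hw
    by_cases hc : φ (c : VH) ∈ Vs
    · exact Subtype.ext (hw.trans (hφ'1 c hc).symm)
    · rcases w.2 with hw2 | hw2
      · exact absurd (hw ▸ hw2) hc
      · exact Subtype.ext (hw2.trans (hφ'2 c hc).symm)
  have hinj' : Function.Injective φ' := by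
    intro a b hab
    by_cases ha : φ (a : VH) ∈ Vs <;> by_cases hb : φ (b : VH) ∈ Vs
    · have : φ (a : VH) = φ (b : VH) := by
        rw [← hφ'1 a ha, ← hφ'1 b hb, hab]
      exact Subtype.ext (hinj this)
    · exfalso
      have : φ (a : VH) = v := by rw [← hφ'1 a ha, hab, hφ'2 b hb]
      exact hvVs (this ▸ ha)
    · exfalso
      have : φ (b : VH) = v := by rw [← hφ'1 b hb, ← hab, hφ'2 a ha]
      exact hvVs (this ▸ hb)
    · have h1 : (a : VH) = y₀ := (hB a a.2).resolve_left ha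
      have h2 : (b : VH) = y₀ := (hB b b.2).resolve_left hb
      exact Subtype.ext (h1.trans h2.symm)
  have ex : ∀ (a b : B) (h : (H.induce B).Adj a b),
      ∃ w : (G.induce (Vs ∪ {v})).Walk (φ' a) (φ' b), w.IsPath ∧
        ∃ (x y : VH) (hxy : H.Adj x y), s(x, y) = s((a : VH), (b : VH)) ∧
          ∀ z ∈ w.support, (z : VG) ∈ (σ hxy).support := by
    intro a b h
    have h₀ : H.Adj (a : VH) (b : VH) := h
    by_cases ha : φ (a : VH) ∈ Vs <;> by_cases hb : φ (b : VH) ∈ Vs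
    · refine ⟨(restrictWalk (σ h₀) (hD h₀ ha hb)).copy
        (Subtype.ext (hφ'1 a ha).symm) (Subtype.ext (hφ'1 b hb).symm), ?_, ?_⟩
      · rw [SimpleGraph.Walk.isPath_copy]
        exact restrictWalk_isPath _ _ (hpath h₀)
      · refine ⟨_, _, h₀, rfl, ?_⟩
        intro z hz
        rw [SimpleGraph.Walk.support_copy] at hz
        exact restrictWalk_mem _ _ hz
    · have hm := hcrossv h₀ ha hb
      refine ⟨(restrictWalk ((σ h₀).takeUntil v hm) (htrunc h₀ hm ha)).copy
        (Subtype.ext (hφ'1 a ha).symm) (Subtype.ext (hφ'2 b hb).symm), ?_, ?_⟩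
      · rw [SimpleGraph.Walk.isPath_copy]
        exact restrictWalk_isPath _ _ ((hpath h₀).takeUntil hm)
      · refine ⟨_, _, h₀, rfl, ?_⟩
        intro z hz
        rw [SimpleGraph.Walk.support_copy] at hz
        exact (σ h₀).support_takeUntil_subset hm (restrictWalk_mem _ _ hz)
    · have hm := hcrossv h₀.symm hb ha
      refine ⟨((restrictWalk ((σ h₀.symm).takeUntil v hm) (htrunc h₀.symm hm hb)).reverse).copy
        (Subtype.ext (hφ'2 a ha).symm) (Subtype.ext (hφ'1 b hb).symm), ?_, ?_⟩
      · rw [SimpleGraph.Walk.isPath_copy]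
        exact (restrictWalk_isPath _ _ ((hpath h₀.symm).takeUntil hm)).reverse
      · refine ⟨_, _, h₀.symm, Sym2.eq_swap, ?_⟩
        intro z hz
        rw [SimpleGraph.Walk.support_copy, SimpleGraph.Walk.support_reverse,
          List.mem_reverse] at hz
        exact (σ h₀.symm).support_takeUntil_subset hm (restrictWalk_mem _ _ hz)
    · exfalso
      have h1 : (a : VH) = y₀ := (hB a a.2).resolve_left ha
      have h2 : (b : VH) = y₀ := (hB b b.2).resolve_left hb
      exact h₀.ne (h1.trans h2.symm)
  choose σ' hp hkey using ex
  refine ⟨φ', fun a b h => σ' a b h, hinj', fun a b h => hp a b h, ?_⟩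
  intro a b a' b' h h' hne w hw hw'
  obtain ⟨x, y, hxy, hs, hz⟩ := hkey a b h
  obtain ⟨x', y', hxy', hs', hz'⟩ := hkey a' b' h'
  have hne₀ : s(x, y) ≠ s(x', y') := by
    rw [hs, hs']
    intro hc
    apply hne
    exact Sym2.map.injective (f := (Subtype.val : B → VH)) Subtype.val_injective
      (by simpa using hc)
  have hd := hdisj hxy hxy' hne₀ (w : VG) (hz w hw) (hz' w hw')
  constructor
  · rcases Sym2.eq_iff.mp hs with ⟨rfl, rfl⟩ | ⟨rfl, rfl⟩
    · rcases hd.1 with h1 | h1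
      · exact Or.inl (key2 a w h1)
      · exact Or.inr (key2 b w h1)
    · rcases hd.1 with h1 | h1
      · exact Or.inr (key2 b w h1)
      · exact Or.inl (key2 a w h1)
  · rcases Sym2.eq_iff.mp hs' with ⟨rfl, rfl⟩ | ⟨rfl, rfl⟩
    · rcases hd.2 with h1 | h1
      · exact Or.inl (key2 a' w h1)
      · exact Or.inr (key2 b' w h1)
    · rcases hd.2 with h1 | h1
      · exact Or.inr (key2 b' w h1)
      · exact Or.inl (key2 a' w h1)
end helper

/-- Let `G` be connected with cut vertex `v`, and let `Vs` be the vertex set of a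
connected component of `G ∖ {v}`. If `H` is connected, `H` is a topological minor of
`G`, and no leaf block of the block-cut tree of `H` is a topological minor of
`G[Vs ∪ {v}]`, then `H` is a topological minor of `G ∖ Vs`. -/
theorem stmt2 {VH VG : Type} [Fintype VH] [Fintype VG]
    (G : SimpleGraph VG) (hG : G.Connected)
    (v : VG) (hv : IsCutVertex G v)
    (Vs : Set VG)
    (hVne : Vs.Nonempty)
    (hVv : ∀ u ∈ Vs, u ≠ v)
    (hVconn : (G.induce Vs).Connected)
    (hVcomp : ∀ u ∈ Vs, ∀ w, w ∉ Vs → w ≠ v → ¬ G.Adj u w)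
    (H : SimpleGraph VH) (hH : H.Connected)
    (htm : TopMinorOf H G)
    (hleaf : ∀ B : Set VH, IsLeafBlock H B →
      ¬ TopMinorOf (H.induce B) (G.induce (Vs ∪ {v}))) :
    TopMinorOf H (G.induce {u | u ∉ Vs}) := by
  classical
  obtain ⟨φ, σ, hinj, hpath, hdisj⟩ := htm
  have hvVs : v ∉ Vs := fun hc => hVv v hc rfl
  by_cases hS : ∀ x, φ x ∉ Vs
  · -- the embedding avoids Vs entirely
    have ex : ∀ (x y : VH) (h : H.Adj x y),
        ∃ w : (G.induce {u | u ∉ Vs}).Walk ⟨φ x, hS x⟩ ⟨φ y, hS y⟩, w.IsPath ∧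
          ∀ z ∈ w.support, (z : VG) ∈ (σ h).support := by
      intro x y h
      have hsup : ∀ z ∈ (σ h).support, z ∈ {u | u ∉ Vs} :=
        lemB hVv hVcomp (σ h) (hS x) (hS y) (hpath h)
      exact ⟨restrictWalk (σ h) hsup, restrictWalk_isPath _ _ (hpath h),
        fun z hz => restrictWalk_mem _ _ hz⟩
    choose σ' hp hkey using ex
    refine ⟨fun x => ⟨φ x, hS x⟩, fun x y h => σ' x y h, ?_, fun x y h => hp x y h, ?_⟩
    · intro a b hab; exact hinj (congrArg Subtype.val hab)
    · intro x y x' y' h h' hne w hw hw'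
      have hd := hdisj h h' hne (w : VG) (hkey x y h w hw) (hkey x' y' h' w hw')
      constructor
      · rcases hd.1 with h1 | h1
        · exact Or.inl (Subtype.ext h1)
        · exact Or.inr (Subtype.ext h1)
      · rcases hd.2 with h1 | h1
        · exact Or.inl (Subtype.ext h1)
        · exact Or.inr (Subtype.ext h1)
  · push_neg at hS
    obtain ⟨x₀, hx₀⟩ := hS
    rcases subsingleton_or_nontrivial VH with hss | hnt
    · -- single-vertex graph: map everything to v
      exact ⟨fun _ => ⟨v, (by exact hvVs : v ∈ {u | u ∉ Vs})⟩,
        fun x y h => ((h.ne (Subsingleton.elim x y)).elim),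
        fun a b _ => Subsingleton.elim a b,
        fun x y h => ((h.ne (Subsingleton.elim x y)).elim),
        fun x y x' y' h _ _ _ _ _ => ((h.ne (Subsingleton.elim x y)).elim)⟩
    · exfalso
      have hvmem : ∀ ⦃x y : VH⦄ (h : H.Adj x y), φ x ∈ Vs → φ y ∉ Vs →
          v ∈ (σ h).support := by
        intro x y h hx hy
        by_cases hyv : φ y = v
        · exact hyv ▸ (σ h).end_mem_support
        · by_contra hc
          exact hy (lemA hVcomp (σ h) hx hc _ (σ h).end_mem_support)
      have hD' : ∀ ⦃x y : VH⦄ (h : H.Adj x y), φ x ∈ Vs → φ y ∈ Vs →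
          ∀ z ∈ (σ h).support, z ∈ Vs ∪ {v} :=
        fun x y h hx hy => lemD hVv hVcomp (σ h) (Or.inl hx) (Or.inl hy) (hpath h)
      have htrunc' : ∀ ⦃x y : VH⦄ (h : H.Adj x y) (hm : v ∈ (σ h).support), φ x ∈ Vs →
          ∀ z ∈ ((σ h).takeUntil v hm).support, z ∈ Vs ∪ {v} :=
        fun x y h hm hx => lemA' hVcomp _ hx rfl ((hpath h).takeUntil hm)
      by_cases hex : ∃ x y, H.Adj x y ∧ φ x ∈ Vs ∧ φ y ∉ Vs
      · obtain ⟨x₁, y₀, h₁, hx₁, hy₀⟩ := hex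
        have hcomm : ∀ x y, H.Adj x y → φ x ∈ Vs → φ y ∉ Vs → y = y₀ := by
          intro x y h hx hy
          by_cases hs : s(x, y) = s(x₁, y₀)
          · rcases Sym2.eq_iff.mp hs with ⟨rfl, rfl⟩ | ⟨rfl, rfl⟩
            · rfl
            · exact absurd hx hy₀
          · have hd := hdisj h h₁ hs v (hvmem h hx hy) (hvmem h₁ hx₁ hy₀)
            have hv1 : v = φ y := (hd.1).resolve_left (fun he => hvVs (by rw [he]; exact hx))
            have hv2 : v = φ y₀ :=
              (hd.2).resolve_left (fun he => hvVs (by rw [he]; exact hx₁))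
            exact hinj (hv1.symm.trans hv2)
        set T : Set VH := {x | φ x ∈ Vs} ∪ {y₀} with hT
        have hy₀T : y₀ ∈ T := Or.inr rfl
        have hpend : ∀ x ∈ T, ∀ y, y ∉ T → H.Adj x y → x = y₀ := by
          intro x hx y hy hadj
          rcases hx with hx | hx
          · exfalso
            have hyVs : φ y ∉ Vs := fun hc => hy (Or.inl hc)
            exact hy (Or.inr (hcomm x y hadj hx hyVs))
          · exact hx
        have hTne : (T \ {y₀}).Nonempty :=
          ⟨x₁, Or.inl hx₁, fun he => hy₀ (by rw [← he]; exact hx₁)⟩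
        obtain ⟨B, hBT, hBleaf⟩ :=
          leafBlock_of_pendant hH T.ncard T y₀ le_rfl hy₀T hTne hpend
        refine hleaf B hBleaf ?_
        exact helperE H G Vs v hvVs φ σ hinj hpath hdisj hD' hvmem htrunc' B y₀
          (fun x hx => (hBT hx).imp id (fun h => h))
      · push_neg at hex
        have hall : ∀ x, φ x ∈ Vs := by
          have step : ∀ {a b : VH} (p : H.Walk a b), φ a ∈ Vs → φ b ∈ Vs := by
            intro a b p
            induction p with
            | nil => exact id
            | cons h q ih =>
              intro ha
              exact ih (hex _ _ h ha)
          intro x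
          obtain ⟨p⟩ := hH.preconnected x₀ x
          exact step p hx₀
        obtain ⟨x₂, hx₂ne⟩ := exists_ne x₀
        have hpend : ∀ x ∈ (Set.univ : Set VH), ∀ y, y ∉ (Set.univ : Set VH) →
            H.Adj x y → x = x₀ := fun x _ y hy _ => absurd (Set.mem_univ y) hy
        have hTne : ((Set.univ : Set VH) \ {x₀}).Nonempty := ⟨x₂, Set.mem_univ _, hx₂ne⟩
        obtain ⟨B, hBT, hBleaf⟩ := leafBlock_of_pendant hH (Set.univ : Set VH).ncard
          Set.univ x₀ le_rfl (Set.mem_univ x₀) hTne hpend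
        exact hleaf B hBleaf (helperE H G Vs v hvVs φ σ hinj hpath hdisj hD' hvmem htrunc'
          B x₀ (fun x _ => Or.inl (hall x)))
end

section
/- Let G be a connected graph, let v be a cut vertex of G, and let V be the vertex set of a connected component of G ∖ {v}. Let H be a connected graph. If H is a minor of G, and for every leaf block B of the block-cut tree of H, B is not a minor of G[V ∪ {v}], then H is a minor of G ∖ V. -/
/-- `H` is a minor of `G`. -/
def MinorOf {V W : Type} (H : SimpleGraph V) (G : SimpleGraph W) : Prop :=
  ∃ φ : V → Set W,
    (∀ x, (φ x).Nonempty) ∧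
    (∀ x, (G.induce (φ x)).Connected) ∧
    (∀ x y, x ≠ y → Disjoint (φ x) (φ y)) ∧
    (∀ x y, H.Adj x y → ∃ u ∈ φ x, ∃ w ∈ φ y, G.Adj u w)

section Helpers

open SimpleGraph

variable {X : Type}

/-- A walk in `G` whose support lies in `A` gives reachability in `G.induce A`. -/
lemma reach_of_walk_support {G : SimpleGraph X} (A : Set X) {a b : X}
    (W : G.Walk a b) (hW : ∀ x ∈ W.support, x ∈ A) :
    ∀ (ha : a ∈ A) (hb : b ∈ A), (G.induce A).Reachable ⟨a, ha⟩ ⟨b, hb⟩ := by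
  induction W with
  | nil => intro ha hb; rfl
  | @cons u c d h W ih =>
    intro ha hb
    have hc : c ∈ A := hW c (by simp [Walk.support_cons])
    have h1 : (G.induce A).Adj ⟨u, ha⟩ ⟨c, hc⟩ := h
    exact (h1.reachable).trans (ih (fun x hx => hW x (by simp [Walk.support_cons, hx])) hc hb)

/-- Reachability in `G.induce A` gives a walk in `G` with support in `A`. -/
lemma walk_support_of_reach {G : SimpleGraph X} (A : Set X) {a b : ↥A}
    (h : (G.induce A).Reachable a b) :
    ∃ W : G.Walk a.1 b.1, ∀ x ∈ W.support, x ∈ A := by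
  obtain ⟨W⟩ := h
  induction W with
  | nil => exact ⟨Walk.nil, by simp⟩
  | @cons u c d h W ih =>
    obtain ⟨W', hW'⟩ := ih
    refine ⟨Walk.cons (by exact h : G.Adj u.1 c.1) W', ?_⟩
    intro x hx
    rcases (List.mem_cons.1 hx : x = u.1 ∨ x ∈ W'.support) with rfl | hx
    · exact u.2
    · exact hW' x hx

/-- First crossing edge of a walk out of a predicate. -/
lemma cross_of_walk {G : SimpleGraph X} (P : X → Prop) {a b : X} (W : G.Walk a b)
    (ha : P a) (hb : ¬ P b) :
    ∃ x ∈ W.support, ∃ y ∈ W.support, P x ∧ ¬ P y ∧ G.Adj x y := by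
  induction W with
  | nil => exact absurd ha hb
  | @cons u c d h W ih =>
    by_cases hc : P c
    · obtain ⟨x, hx, y, hy, h1, h2, h3⟩ := ih hc hb
      exact ⟨x, by simp [Walk.support_cons, hx], y, by simp [Walk.support_cons, hy], h1, h2, h3⟩
    · exact ⟨u, by simp [Walk.support_cons], c, by simp [Walk.support_cons], ha, hc, h⟩

/-- Truncation: walking toward `v0 ∈ A`, staying in `C`, if from `A ∩ C` one can only leave
`A` at `v0`, then there is a walk with support in `A ∩ C`. -/
lemma trunc_walk {G : SimpleGraph X} {A C : Set X} {v0 : X}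
    (hstep : ∀ x y, x ∈ A → x ∈ C → y ∈ C → G.Adj x y → y ∈ A ∨ x = v0) :
    ∀ {a : X} (W : G.Walk a v0), (∀ x ∈ W.support, x ∈ C) → a ∈ A → v0 ∈ A →
    ∃ W' : G.Walk a v0, ∀ x ∈ W'.support, x ∈ A ∧ x ∈ C := by
  intro a W
  induction W with
  | nil => intro hC ha _; exact ⟨Walk.nil, by simpa using ⟨ha, hC _ (by simp)⟩⟩
  | @cons u c d h W ih =>
    intro hC ha hv0
    have huC : u ∈ C := hC u (by simp [Walk.support_cons])
    have hcC : c ∈ C := hC c (by simp [Walk.support_cons])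
    by_cases hcA : c ∈ A
    · obtain ⟨W', hW'⟩ := ih hstep (fun x hx => hC x (by simp [Walk.support_cons, hx])) hcA hv0
      refine ⟨Walk.cons h W', ?_⟩
      intro x hx
      rcases (by simpa [Walk.support_cons] using hx : x = u ∨ x ∈ W'.support) with rfl | hx
      · exact ⟨ha, huC⟩
      · exact hW' x hx
    · have : u = d := (hstep u c ha huC hcC h).resolve_left hcA
      subst this
      exact ⟨Walk.nil, by simpa using ⟨ha, huC⟩⟩

open SimpleGraph
variable {X : Type}

/-- Iso between a doubly-induced subgraph and the induced subgraph on the image set. -/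
noncomputable def induceInduceIso (G : SimpleGraph X) (A : Set X) (A' : Set ↥A) :
    ((G.induce A).induce A') ≃g (G.induce (Subtype.val '' A')) where
  toEquiv := Equiv.Set.image Subtype.val A' Subtype.val_injective
  map_rel_iff' := by
    intro a b
    simp [Equiv.Set.image, Equiv.Set.imageOfInjOn, comap_adj]

lemma connected_induce_induce_iff (G : SimpleGraph X) (A : Set X) (A' : Set ↥A) :
    ((G.induce A).induce A').Connected ↔ (G.induce (Subtype.val '' A')).Connected :=
  (induceInduceIso G A A').connected_iff

lemma connected_induce_of_forall_walk {G : SimpleGraph X} {A : Set X} {r : X} (hr : r ∈ A)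
    (h : ∀ x ∈ A, ∃ W : G.Walk x r, ∀ y ∈ W.support, y ∈ A) :
    (G.induce A).Connected := by
  rw [connected_iff_exists_forall_reachable]
  refine ⟨⟨r, hr⟩, ?_⟩
  rintro ⟨x, hx⟩
  obtain ⟨W, hW⟩ := h x hx
  exact (reach_of_walk_support A W hW hx hr).symm

lemma card_cc_eq_one {G : SimpleGraph X} (h : G.Connected) :
    Nat.card G.ConnectedComponent = 1 := by
  have := h.preconnected.subsingleton_connectedComponent
  rw [Nat.card_eq_one_iff_unique]
  exact ⟨this, ⟨G.connectedComponentMk h.nonempty.some⟩⟩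

lemma not_isCutVertex {G : SimpleGraph X} (hG : G.Connected) {t : X}
    (h : (G.induce {u | u ≠ t}).Connected) : ¬ IsCutVertex G t := by
  unfold IsCutVertex
  rw [card_cc_eq_one hG, card_cc_eq_one h]
  omega

lemma exists_leafBlock {VH : Type} [Fintype VH] (H : SimpleGraph VH) (hH : H.Connected) :
    ∀ (n : ℕ) (T : Set VH) (c : VH), T.ncard ≤ n → T.Nonempty → c ∉ T →
      (∀ x ∈ T, ∀ z, z ∉ T → z ≠ c → ¬ H.Adj x z) →
      ∃ B : Set VH, IsLeafBlock H B ∧ B ⊆ T ∪ {c} := by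
  intro n
  induction n with
  | zero =>
    intro T c hn hne _ _
    rw [Nat.le_zero, Set.ncard_eq_zero (Set.toFinite T)] at hn
    exact absurd (hn ▸ hne) (by simp)
  | succ n ih =>
    intro T c hn hne hcT hsep
    by_cases hTconn : (H.induce T).Connected
    · by_cases hall : ∀ t ∈ T, (H.induce ((T \ {t}) ∪ {c})).Connected
      · -- `T ∪ {c}` is a leaf block
        obtain ⟨t0, ht0⟩ := hne
        have ht0c : t0 ≠ c := fun h => hcT (h ▸ ht0)
        have hstep : ∀ x y, x ∈ T ∪ {c} → x ∈ (Set.univ : Set VH) →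
            y ∈ (Set.univ : Set VH) → H.Adj x y → y ∈ T ∪ {c} ∨ x = c := by
          intro x y hx _ _ hxy
          rcases hx with hx | hx
          · by_cases hyT : y ∈ T
            · exact Or.inl (Or.inl hyT)
            · by_cases hyc : y = c
              · exact Or.inl (Or.inr hyc)
              · exact absurd hxy (hsep x hx y hyT hyc)
          · exact Or.inr hx
        have hconn : (H.induce (T ∪ {c})).Connected := by
          refine connected_induce_of_forall_walk (r := c) (Or.inr rfl) ?_
          intro x hx
          obtain ⟨W⟩ := hH.preconnected x c
          obtain ⟨W', hW'⟩ := trunc_walk hstep W (fun _ _ => Set.mem_univ _) hx (Or.inr rfl)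
          exact ⟨W', fun y hy => (hW' y hy).1⟩
        have h2 : 2 ≤ Nat.card ↥(T ∪ {c}) := by
          rw [Nat.card_coe_set_eq]
          have := (Set.one_lt_ncard_iff (Set.toFinite (T ∪ {c}))).2
            ⟨t0, c, Or.inl ht0, Or.inr rfl, ht0c⟩
          omega
        have himg : ∀ (B' : Set VH) (w : ↥B'),
            (Subtype.val '' {u : ↥B' | u ≠ w}) = B' \ {(w : VH)} := by
          intro B' w
          ext x
          constructor
          · rintro ⟨u, hu, rfl⟩
            exact ⟨u.2, fun h => hu (Subtype.ext (Set.mem_singleton_iff.1 h))⟩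
          · rintro ⟨hx, hxw⟩
            exact ⟨⟨x, hx⟩, fun h => hxw (Set.mem_singleton_iff.2 (congrArg Subtype.val h)),
              rfl⟩
        have hdel : ∀ w : ↥(T ∪ {c}),
            (((H.induce (T ∪ {c})).induce {u | u ≠ w})).Connected := by
          intro w
          rw [connected_induce_induce_iff, himg]
          rcases w.2 with hw | hw
          · have hca : c ≠ (w : VH) := fun h => hcT (h ▸ hw)
            have heq : (T ∪ {c}) \ {(w : VH)} = (T \ {(w : VH)}) ∪ {c} := by
              ext x
              simp only [Set.mem_diff, Set.mem_union, Set.mem_singleton_iff]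
              constructor
              · rintro ⟨hx | rfl, hxa⟩
                · exact Or.inl ⟨hx, hxa⟩
                · exact Or.inr rfl
              · rintro (⟨hx, hxa⟩ | rfl)
                · exact ⟨Or.inl hx, hxa⟩
                · exact ⟨Or.inr rfl, hca⟩
            rw [heq]
            exact hall _ hw
          · have hw' : (w : VH) = c := hw
            have heq : (T ∪ {c}) \ {(w : VH)} = T := by
              rw [hw']
              ext x
              simp only [Set.mem_diff, Set.mem_union, Set.mem_singleton_iff]
              constructor
              · rintro ⟨hx | rfl, hxc⟩
                · exact hx
                · exact absurd rfl hxc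
              · intro hx
                exact ⟨Or.inl hx, fun h => hcT (h ▸ hx)⟩
            rw [heq]
            exact hTconn
        have hmax : ∀ B' : Set VH, T ∪ {c} ⊆ B' → IsBiconnected (H.induce B') →
            B' = T ∪ {c} := by
          intro B' hsub hbi
          by_contra hne'
          obtain ⟨z, hzB', hzTc⟩ :=
            Set.exists_of_ssubset (ssubset_of_subset_of_ne hsub (Ne.symm hne'))
          have hcB' : c ∈ B' := hsub (Or.inr rfl)
          obtain ⟨-, -, hdel'⟩ := hbi
          have hconn' := hdel' ⟨c, hcB'⟩
          rw [connected_induce_induce_iff, himg] at hconn'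
          have ht0B : t0 ∈ B' \ {c} :=
            ⟨hsub (Or.inl ht0), fun h => ht0c (Set.mem_singleton_iff.1 h)⟩
          have hzB : z ∈ B' \ {c} :=
            ⟨hzB', fun h => hzTc (Or.inr (Set.mem_singleton_iff.1 h))⟩
          obtain ⟨W, hW⟩ := walk_support_of_reach _
            (hconn'.preconnected ⟨t0, ht0B⟩ ⟨z, hzB⟩)
          obtain ⟨x, hxs, y, hys, hxT, hyT, hadj⟩ :=
            cross_of_walk (· ∈ T) W ht0 (fun h => hzTc (Or.inl h))
          have hyc : y ≠ c := fun h => (hW y hys).2 (Set.mem_singleton_iff.2 h)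
          exact hsep x hxT y hyT hyc hadj
        have hcut : {c' : VH | IsCutVertex H c' ∧ c' ∈ T ∪ {c}} ⊆ {c} := by
          rintro c' ⟨hcv, hmem⟩
          by_contra hne'
          have hc'c : c' ≠ c := fun h => hne' (Set.mem_singleton_iff.2 h)
          have hc'T : c' ∈ T := hmem.resolve_right (fun h => hc'c (Set.mem_singleton_iff.1 h))
          have hcc' : c ≠ c' := fun h => hcT (by rw [h]; exact hc'T)
          refine absurd hcv (not_isCutVertex hH ?_)
          refine connected_induce_of_forall_walk (r := c) hcc' ?_
          intro x hx
          by_cases hxT : x ∈ T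
          · have hD := hall c' hc'T
            have hxD : x ∈ (T \ {c'}) ∪ {c} :=
              Or.inl ⟨hxT, fun h => hx (Set.mem_singleton_iff.1 h)⟩
            obtain ⟨W, hW⟩ := walk_support_of_reach _
              (hD.preconnected ⟨x, hxD⟩ ⟨c, Or.inr rfl⟩)
            refine ⟨W, fun y hy => ?_⟩
            rcases hW y hy with ⟨-, hy2⟩ | hy2
            · exact fun h => hy2 (Set.mem_singleton_iff.2 h)
            · intro h
              rw [Set.mem_singleton_iff.1 hy2] at h
              exact hcc' h
          · have hstep2 : ∀ a y, a ∈ {u : VH | u ∉ T} → a ∈ (Set.univ : Set VH) →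
                y ∈ (Set.univ : Set VH) → H.Adj a y → y ∈ {u : VH | u ∉ T} ∨ a = c := by
              intro a y ha _ _ hadj
              by_cases hac : a = c
              · exact Or.inr hac
              · by_cases hyT : y ∈ T
                · exact absurd hadj.symm (hsep y hyT a ha hac)
                · exact Or.inl hyT
            obtain ⟨W⟩ := hH.preconnected x c
            obtain ⟨W', hW'⟩ := trunc_walk hstep2 W (fun _ _ => Set.mem_univ _) hxT hcT
            exact ⟨W', fun y hy => fun h => (hW' y hy).1 (by rw [h]; exact hc'T)⟩
        refine ⟨T ∪ {c}, ⟨⟨⟨hconn, h2, hdel⟩, hmax⟩, ?_⟩, subset_rfl⟩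
        have := Set.ncard_le_ncard hcut (Set.toFinite {c})
        simpa using this
      · -- some `t ∈ T` disconnects `(T \ {t}) ∪ {c}`
        push_neg at hall
        obtain ⟨t, htT, hnc⟩ := hall
        have hcD : c ∈ (T \ {t}) ∪ {c} := Or.inr rfl
        rw [connected_iff] at hnc
        push_neg at hnc
        have hpre : ¬ (H.induce ((T \ {t}) ∪ {c})).Preconnected :=
          fun h => (hnc h).elim ⟨c, hcD⟩
        rw [SimpleGraph.Preconnected] at hpre
        push_neg at hpre
        obtain ⟨a, b, hab⟩ := hpre
        obtain ⟨a0, ha0⟩ : ∃ a0 : ↥((T \ {t}) ∪ {c}),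
            ¬ (H.induce ((T \ {t}) ∪ {c})).Reachable a0 ⟨c, hcD⟩ := by
          by_cases h1 : (H.induce ((T \ {t}) ∪ {c})).Reachable a ⟨c, hcD⟩
          · exact ⟨b, fun h2 => hab (h1.trans h2.symm)⟩
          · exact ⟨a, h1⟩
        set C : Set VH := {x | ∃ hx : x ∈ (T \ {t}) ∪ {c},
          (H.induce ((T \ {t}) ∪ {c})).Reachable a0 ⟨x, hx⟩} with hCdef
        have hCD : C ⊆ (T \ {t}) ∪ {c} := by
          rintro x ⟨hx, -⟩; exact hx
        have hcC : c ∉ C := by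
          rintro ⟨h1, h2⟩; exact ha0 h2
        have haC : ↑a0 ∈ C := ⟨a0.2, Reachable.refl _⟩
        have hCT : C ⊆ T := by
          intro x hx
          rcases hCD hx with h | h
          · exact h.1
          · exact absurd (Set.mem_singleton_iff.1 h ▸ hx) hcC
        have htC : t ∉ C := by
          intro h
          rcases hCD h with h' | h'
          · exact h'.2 rfl
          · exact hcT (Set.mem_singleton_iff.1 h' ▸ htT)
        have hCss : C ⊂ T := ⟨hCT, fun hsub => htC (hsub htT)⟩
        have hcard : C.ncard ≤ n := by
          have h1 := Set.ncard_lt_ncard hCss (Set.toFinite T)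
          omega
        have hsep' : ∀ x ∈ C, ∀ z, z ∉ C → z ≠ t → ¬ H.Adj x z := by
          intro x hx z hz hzt hadj
          obtain ⟨hxD, hxr⟩ := hx
          by_cases hzD : z ∈ (T \ {t}) ∪ {c}
          · refine hz ⟨hzD, hxr.trans (SimpleGraph.Adj.reachable ?_)⟩
            exact hadj
          · have hzT : z ∉ T := fun h =>
              hzD (Or.inl ⟨h, fun h' => hzt (Set.mem_singleton_iff.1 h')⟩)
            have hzc : z ≠ c := fun h => hzD (Or.inr (Set.mem_singleton_iff.2 h))
            exact hsep x (hCT ⟨hxD, hxr⟩) z hzT hzc hadj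
        obtain ⟨B, hB, hBsub⟩ := ih C t hcard ⟨↑a0, haC⟩ htC hsep'
        refine ⟨B, hB, hBsub.trans ?_⟩
        rintro x (hx | hx)
        · exact Or.inl (hCT hx)
        · exact Or.inl (Set.mem_singleton_iff.1 hx ▸ htT)
    · -- `H[T]` is disconnected
      have hne' : Nonempty ↥T := ⟨⟨hne.some, hne.some_mem⟩⟩
      rw [connected_iff] at hTconn
      push_neg at hTconn
      have hpre : ¬ (H.induce T).Preconnected := fun h => (hTconn h).elim hne'.some
      rw [SimpleGraph.Preconnected] at hpre
      push_neg at hpre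
      obtain ⟨a, b, hab⟩ := hpre
      set C : Set VH := {x | ∃ hx : x ∈ T, (H.induce T).Reachable a ⟨x, hx⟩} with hCdef
      have hCT : C ⊆ T := by rintro x ⟨hx, -⟩; exact hx
      have haC : ↑a ∈ C := ⟨a.2, Reachable.refl _⟩
      have hbC : ↑b ∉ C := by
        rintro ⟨h1, h2⟩
        exact hab h2
      have hCss : C ⊂ T := ⟨hCT, fun hsub => hbC (hsub b.2)⟩
      have hcard : C.ncard ≤ n := by
        have h1 := Set.ncard_lt_ncard hCss (Set.toFinite T)
        omega
      have hsep' : ∀ x ∈ C, ∀ z, z ∉ C → z ≠ c → ¬ H.Adj x z := by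
        intro x hx z hz hzc hadj
        obtain ⟨hxT, hxr⟩ := hx
        by_cases hzT : z ∈ T
        · refine hz ⟨hzT, hxr.trans (SimpleGraph.Adj.reachable ?_)⟩
          exact hadj
        · exact hsep x hxT z hzT hzc hadj
      obtain ⟨B, hB, hBsub⟩ := ih C c hcard ⟨↑a, haC⟩ (fun h => hcT (hCT h)) hsep'
      exact ⟨B, hB, hBsub.trans (Set.union_subset_union_left _ hCT)⟩

lemma connected_induce_singleton (G : SimpleGraph X) (p : X) :
    (G.induce {p}).Connected := by
  rw [connected_iff_exists_forall_reachable]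
  refine ⟨⟨p, rfl⟩, ?_⟩
  rintro ⟨x, hx⟩
  have : (⟨x, hx⟩ : ↥({p} : Set X)) = ⟨p, rfl⟩ := Subtype.ext hx
  rw [this]


end Helpers

/-- Let `G` be connected with cut vertex `v`, and let `Vs` be the vertex set of a
connected component of `G ∖ {v}`. If `H` is connected, `H` is a minor of `G`, and no
leaf block of the block-cut tree of `H` is a minor of `G[Vs ∪ {v}]`, then `H` is a
minor of `G ∖ Vs`. -/
theorem stmt3 {VH VG : Type} [Fintype VH] [Fintype VG]
    (G : SimpleGraph VG) (hG : G.Connected)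
    (v : VG) (hv : IsCutVertex G v)
    (Vs : Set VG)
    (hVne : Vs.Nonempty)
    (hVv : ∀ u ∈ Vs, u ≠ v)
    (hVconn : (G.induce Vs).Connected)
    (hVcomp : ∀ u ∈ Vs, ∀ w, w ∉ Vs → w ≠ v → ¬ G.Adj u w)
    (H : SimpleGraph VH) (hH : H.Connected)
    (hm : MinorOf H G)
    (hleaf : ∀ B : Set VH, IsLeafBlock H B →
      ¬ MinorOf (H.induce B) (G.induce (Vs ∪ {v}))) :
    MinorOf H (G.induce {u | u ∉ Vs}) := by
  obtain ⟨φ, hφne, hφconn, hφdisj, hφadj⟩ := hm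
  have hvVs : v ∉ Vs := fun h => hVv v h rfl
  have hcrossv : ∀ A : Set VG, (G.induce A).Connected → ∀ a ∈ A, a ∈ Vs →
      ∀ b ∈ A, b ∉ Vs → v ∈ A := by
    intro A hA a haA haVs b hbA hbVs
    obtain ⟨W, hW⟩ := walk_support_of_reach A (hA.preconnected ⟨a, haA⟩ ⟨b, hbA⟩)
    obtain ⟨x, hxs, y, hys, hxVs, hyVs, hadj⟩ := cross_of_walk (· ∈ Vs) W haVs hbVs
    by_cases hyv : y = v
    · exact hyv ▸ hW y hys
    · exact absurd hadj (hVcomp x hxVs y hyVs hyv)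
  by_cases hsing : ∃ x y : VH, x ≠ y
  case neg =>
    push_neg at hsing
    refine ⟨fun _ => {⟨v, hvVs⟩}, ?_, ?_, ?_, ?_⟩
    · intro x; exact ⟨_, rfl⟩
    · intro x; exact connected_induce_singleton _ _
    · intro x y hxy; exact absurd (hsing x y) hxy
    · intro x y hxy; exact absurd (hsing x y) hxy.ne
  case pos =>
    have hS : ∀ x : VH, ¬ (φ x ⊆ Vs) := by
      intro x₀' hx₀'
      obtain ⟨B, hBleaf, hBprop⟩ : ∃ B : Set VH, IsLeafBlock H B ∧
          ∀ b ∈ B, φ b ⊆ Vs ∨ v ∈ φ b := by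
        by_cases hallsub : ∀ x : VH, φ x ⊆ Vs
        · obtain ⟨x1, y1, hxy1⟩ := hsing
          obtain ⟨B, hB, -⟩ := exists_leafBlock H hH ({z : VH | z ≠ x1}.ncard)
            {z : VH | z ≠ x1} x1 le_rfl ⟨y1, hxy1.symm⟩ (by simp)
            (fun x hx z hz hzc => absurd (not_not.1 hz) hzc)
          exact ⟨B, hB, fun b _ => Or.inl (hallsub b)⟩
        · push_neg at hallsub
          obtain ⟨y0, hy0⟩ := hallsub
          obtain ⟨W⟩ := hH.preconnected x₀' y0
          obtain ⟨x1, -, y1, -, hx1S, hy1S, hadj1⟩ :=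
            cross_of_walk (fun x => φ x ⊆ Vs) W hx₀' hy0
          obtain ⟨u1, hu1, w1, hw1, huw⟩ := hφadj x1 y1 hadj1
          have hvy1 : v ∈ φ y1 := by
            by_cases hw1V : w1 ∈ Vs
            · obtain ⟨b1, hb1, hb1V⟩ := (Set.not_subset).1 hy1S
              exact hcrossv (φ y1) (hφconn y1) w1 hw1 hw1V b1 hb1 hb1V
            · by_cases hw1v : w1 = v
              · exact hw1v ▸ hw1
              · exact absurd huw (hVcomp u1 (hx1S hu1) w1 hw1V hw1v)
          have hsepS : ∀ x ∈ {x : VH | φ x ⊆ Vs}, ∀ z, z ∉ {x : VH | φ x ⊆ Vs} →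
              z ≠ y1 → ¬ H.Adj x z := by
            intro x hx z hz hzx hadj
            obtain ⟨u, hu, w, hw, huw'⟩ := hφadj x z hadj
            have hwVs : w ∉ Vs := by
              intro hwVs
              obtain ⟨b1, hb1, hb1V⟩ := (Set.not_subset).1 hz
              have hvz : v ∈ φ z := hcrossv (φ z) (hφconn z) w hw hwVs b1 hb1 hb1V
              exact Set.disjoint_left.1 (hφdisj z y1 hzx) hvz hvy1
            have hwv : w ≠ v := fun h =>
              Set.disjoint_left.1 (hφdisj z y1 hzx) (h ▸ hw) hvy1
            exact hVcomp u (hx hu) w hwVs hwv huw'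
          obtain ⟨B, hB, hBsub⟩ := exists_leafBlock H hH
            ({x : VH | φ x ⊆ Vs}.ncard) {x : VH | φ x ⊆ Vs} y1 le_rfl
            ⟨x₀', hx₀'⟩ hy1S hsepS
          refine ⟨B, hB, fun b hb => ?_⟩
          rcases hBsub hb with hbS | hbx
          · exact Or.inl hbS
          · exact Or.inr ((Set.mem_singleton_iff.1 hbx) ▸ hvy1)
      refine hleaf B hBleaf ?_
      refine ⟨fun b => {u : ↥(Vs ∪ {v}) | ↑u ∈ φ ↑b}, ?_, ?_, ?_, ?_⟩
      · intro b
        rcases hBprop ↑b b.2 with h | h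
        · obtain ⟨u, hu⟩ := hφne ↑b
          exact ⟨⟨u, Or.inl (h hu)⟩, hu⟩
        · exact ⟨⟨v, Or.inr rfl⟩, h⟩
      · intro b
        rw [connected_induce_induce_iff]
        have himg : Subtype.val '' {u : ↥(Vs ∪ {v}) | ↑u ∈ φ ↑b} =
            φ ↑b ∩ (Vs ∪ {v}) := by
          ext p
          constructor
          · rintro ⟨u, hu, rfl⟩; exact ⟨hu, u.2⟩
          · rintro ⟨h1, h2⟩; exact ⟨⟨p, h2⟩, h1, rfl⟩
        rw [himg]
        rcases hBprop ↑b b.2 with h | h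
        · have heq : φ ↑b ∩ (Vs ∪ {v}) = φ ↑b :=
            Set.inter_eq_self_of_subset_left (h.trans Set.subset_union_left)
          rw [heq]; exact hφconn ↑b
        · refine connected_induce_of_forall_walk (r := v) ⟨h, Or.inr rfl⟩ ?_
          intro x hx
          obtain ⟨W, hW⟩ := walk_support_of_reach (φ ↑b)
            ((hφconn ↑b).preconnected ⟨x, hx.1⟩ ⟨v, h⟩)
          have hstep : ∀ p q, p ∈ Vs ∪ {v} → p ∈ φ (↑b : VH) → q ∈ φ (↑b : VH) →
              G.Adj p q → q ∈ Vs ∪ {v} ∨ p = v := by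
            intro p q hp _ _ hpq
            rcases hp with hp | hp
            · by_cases hqV : q ∈ Vs
              · exact Or.inl (Or.inl hqV)
              · by_cases hqv : q = v
                · exact Or.inl (Or.inr hqv)
                · exact absurd hpq (hVcomp p hp q hqV hqv)
            · exact Or.inr hp
          obtain ⟨W', hW'⟩ := trunc_walk hstep W hW hx.2 (Or.inr rfl)
          exact ⟨W', fun y hy => ⟨(hW' y hy).2, (hW' y hy).1⟩⟩
      · intro b b' hbb'
        rw [Set.disjoint_left]
        rintro u hu hu'
        exact Set.disjoint_left.1
          (hφdisj ↑b ↑b' (fun h => hbb' (Subtype.ext h))) hu hu'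
      · intro b b' hadj
        have hadj' : H.Adj ↑b ↑b' := hadj
        obtain ⟨u, hu, w, hw, huw⟩ := hφadj ↑b ↑b' hadj'
        have hbb' : (↑b : VH) ≠ ↑b' := hadj'.ne
        have key : ∀ (y y' : ↥B) (p q : VG), (↑y : VH) ≠ ↑y' → p ∈ φ ↑y →
            q ∈ φ ↑y' → G.Adj p q → p ∈ Vs ∪ {v} := by
          intro y y' p q hne hp hq hpq
          rcases hBprop ↑y y.2 with h | h
          · exact Or.inl (h hp)
          · by_contra hpmem
            have hpVs : p ∉ Vs := fun h' => hpmem (Or.inl h')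
            have hpv : p ≠ v := fun h' => hpmem (Or.inr h')
            rcases hBprop ↑y' y'.2 with h' | h'
            · exact hVcomp q (h' hq) p hpVs hpv hpq.symm
            · exact Set.disjoint_left.1 (hφdisj ↑y ↑y' hne) h h'
        have hu' : u ∈ Vs ∪ {v} := key b b' u w hbb' hu hw huw
        have hw' : w ∈ Vs ∪ {v} := key b' b w u hbb'.symm hw hu huw.symm
        exact ⟨⟨u, hu'⟩, hu, ⟨w, hw'⟩, hw, huw⟩
    refine ⟨fun x => {u : ↥{u : VG | u ∉ Vs} | ↑u ∈ φ x}, ?_, ?_, ?_, ?_⟩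
    · intro x
      obtain ⟨u, hu, huVs⟩ := (Set.not_subset).1 (hS x)
      exact ⟨⟨u, huVs⟩, hu⟩
    · intro x
      rw [connected_induce_induce_iff]
      have himg : Subtype.val '' {u : ↥{u : VG | u ∉ Vs} | ↑u ∈ φ x} = φ x \ Vs := by
        ext p
        constructor
        · rintro ⟨u, hu, rfl⟩; exact ⟨hu, u.2⟩
        · rintro ⟨h1, h2⟩; exact ⟨⟨p, h2⟩, h1, rfl⟩
      rw [himg]
      by_cases hmeet : ∃ p ∈ φ x, p ∈ Vs
      · obtain ⟨p, hp, hpVs⟩ := hmeet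
        obtain ⟨b1, hb1, hb1V⟩ := (Set.not_subset).1 (hS x)
        have hvx : v ∈ φ x := hcrossv (φ x) (hφconn x) p hp hpVs b1 hb1 hb1V
        refine connected_induce_of_forall_walk (r := v) ⟨hvx, hvVs⟩ ?_
        intro q hq
        obtain ⟨W, hW⟩ := walk_support_of_reach (φ x)
          ((hφconn x).preconnected ⟨q, hq.1⟩ ⟨v, hvx⟩)
        have hstep : ∀ p' q', p' ∈ {u : VG | u ∉ Vs} → p' ∈ φ x → q' ∈ φ x →
            G.Adj p' q' → q' ∈ {u : VG | u ∉ Vs} ∨ p' = v := by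
          intro p' q' hp' _ _ hpq
          by_cases hp'v : p' = v
          · exact Or.inr hp'v
          · by_cases hq'V : q' ∈ Vs
            · exact absurd hpq.symm (hVcomp q' hq'V p' hp' hp'v)
            · exact Or.inl hq'V
        obtain ⟨W', hW'⟩ := trunc_walk hstep W hW hq.2 hvVs
        exact ⟨W', fun y hy => ⟨(hW' y hy).2, (hW' y hy).1⟩⟩
      · push_neg at hmeet
        have heq : φ x \ Vs = φ x := by
          ext p
          constructor
          · exact fun h => h.1
          · exact fun h => ⟨h, hmeet p h⟩
        rw [heq]; exact hφconn x
    · intro x y hxy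
      rw [Set.disjoint_left]
      rintro u hu hu'
      exact Set.disjoint_left.1 (hφdisj x y hxy) hu hu'
    · intro x y hadj
      obtain ⟨u, hu, w, hw, huw⟩ := hφadj x y hadj
      have key : ∀ (a b : VH) (p q : VG), a ≠ b → p ∈ φ a → q ∈ φ b →
          G.Adj p q → p ∉ Vs := by
        intro a b p q hab hp hq hpq hpVs
        obtain ⟨b1, hb1, hb1V⟩ := (Set.not_subset).1 (hS a)
        have hva : v ∈ φ a := hcrossv (φ a) (hφconn a) p hp hpVs b1 hb1 hb1V
        by_cases hqVs : q ∈ Vs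
        · obtain ⟨b2, hb2, hb2V⟩ := (Set.not_subset).1 (hS b)
          have hvb : v ∈ φ b := hcrossv (φ b) (hφconn b) q hq hqVs b2 hb2 hb2V
          exact Set.disjoint_left.1 (hφdisj a b hab) hva hvb
        · have hqv : q ≠ v := fun h =>
            Set.disjoint_left.1 (hφdisj a b hab) hva (h ▸ hq)
          exact hVcomp p hpVs q hqVs hqv hpq
      have hu' : u ∉ Vs := key x y u w hadj.ne hu hw huw
      have hw' : w ∉ Vs := key y x w u hadj.ne.symm hw hu huw.symm
      exact ⟨⟨u, hu'⟩, hu, ⟨w, hw'⟩, hw, huw⟩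
end

section
/- Let H be a graph, let i ≥ 2, let G be a connected graph with a cut vertex v, and let V be the vertex set of a connected component of G ∖ {v}. If H is 2-connected, H is a topological minor of G, and H is not a topological minor of G[V ∪ {v}], then H is a topological minor of G ∖ V. -/
open SimpleGraph

namespace Stmt4Aux

variable {V : Type}

/-- A walk avoiding `v` stays in a set `T` that is closed under adjacency away from `v`. -/
lemma stay_aux {G : SimpleGraph V} {T : Set V} {v : V}
    (hT : ∀ ⦃a b : V⦄, G.Adj a b → a ∈ T → a ≠ v → b ≠ v → b ∈ T) :
    ∀ {a b : V} (p : G.Walk a b), v ∉ p.support → a ∈ T → ∀ w ∈ p.support, w ∈ T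
  | a, _, SimpleGraph.Walk.nil, hv, ha, w, hw => by
      simp only [SimpleGraph.Walk.support_nil, List.mem_singleton] at hw
      exact hw ▸ ha
  | a, b, SimpleGraph.Walk.cons h q, hv, ha, w, hw => by
      simp only [SimpleGraph.Walk.support_cons, List.mem_cons] at hv hw
      push_neg at hv
      rcases hw with rfl | hw
      · exact ha
      · have hc : _ ∈ T := hT h ha (Ne.symm hv.1)
          (fun e => hv.2 (e ▸ q.start_mem_support))
        exact stay_aux hT q hv.2 hc w hw

lemma path_stay {G : SimpleGraph V} {S : Set V} {v : V}
    (hcl : ∀ ⦃a b : V⦄, G.Adj a b → a ∈ S → a ≠ v → b ∈ S)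
    (hccl : ∀ ⦃a b : V⦄, G.Adj a b → a ∉ S → a ≠ v → b ≠ v → b ∉ S) :
    ∀ {a b : V} (p : G.Walk a b), p.IsPath → a ∈ S → b ∈ S → ∀ w ∈ p.support, w ∈ S
  | a, _, SimpleGraph.Walk.nil, _, ha, _, w, hw => by
      simp only [SimpleGraph.Walk.support_nil, List.mem_singleton] at hw
      exact hw ▸ ha
  | a, b, @SimpleGraph.Walk.cons _ _ _ c _ h q, hp, ha, hb, w, hw => by
      have hq : q.IsPath := hp.of_cons
      have hans : a ∉ q.support := ((SimpleGraph.Walk.cons_isPath_iff h q).mp hp).2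
      by_cases hc : c ∈ S
      · simp only [SimpleGraph.Walk.support_cons, List.mem_cons] at hw
        rcases hw with rfl | hw
        · exact ha
        · exact path_stay hcl hccl q hq hc hb w hw
      · exfalso
        have hav : a = v := by
          by_contra hne
          exact hc (hcl h ha hne)
        subst hav
        exact (stay_aux (T := Sᶜ) hccl q hans hc b q.end_mem_support) hb

/-- Transport a walk whose support lies in `S` into the induced subgraph. -/
def toInduce {G : SimpleGraph V} {S : Set V} :
    ∀ {a b : V} (p : G.Walk a b) (ha : a ∈ S) (hb : b ∈ S),
      (∀ w ∈ p.support, w ∈ S) → (G.induce S).Walk ⟨a, ha⟩ ⟨b, hb⟩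
  | _, _, SimpleGraph.Walk.nil, _, _, _ => SimpleGraph.Walk.nil
  | _, _, @SimpleGraph.Walk.cons _ _ _ c _ h q, ha, hb, hs =>
      SimpleGraph.Walk.cons (by exact h)
        (toInduce q (hs c (by simp)) hb
          (fun w hw => hs w (by simp [SimpleGraph.Walk.support_cons, hw])))

lemma toInduce_support {G : SimpleGraph V} {S : Set V} :
    ∀ {a b : V} (p : G.Walk a b) (ha : a ∈ S) (hb : b ∈ S)
      (hs : ∀ w ∈ p.support, w ∈ S),
      ((toInduce p ha hb hs).support).map Subtype.val = p.support
  | _, _, SimpleGraph.Walk.nil, _, _, _ => by simp [toInduce]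
  | _, _, SimpleGraph.Walk.cons h q, ha, hb, hs => by
      simp only [toInduce, SimpleGraph.Walk.support_cons, List.map_cons]
      exact congrArg (List.cons _) (toInduce_support q _ hb _)

section walkmap
variable {VH VG : Type} {H : SimpleGraph VH} {G : SimpleGraph VG} {K : SimpleGraph VH}
  (φ : VH → VG) (σ : ∀ ⦃x y : VH⦄, H.Adj x y → G.Walk (φ x) (φ y))
  (hK : ∀ ⦃x y : VH⦄, K.Adj x y → H.Adj x y)

def mapWalk : ∀ {x y : VH}, K.Walk x y → G.Walk (φ x) (φ y)
  | _, _, SimpleGraph.Walk.nil => SimpleGraph.Walk.nil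
  | _, _, SimpleGraph.Walk.cons h q => (σ (hK h)).append (mapWalk q)

lemma mapWalk_avoid (v : VG)
    (hav : ∀ ⦃x y : VH⦄ (h : K.Adj x y), v ∉ (σ (hK h)).support) :
    ∀ {x y : VH} (p : K.Walk x y), v ≠ φ x → v ∉ (mapWalk φ σ hK p).support
  | _, _, SimpleGraph.Walk.nil, hx => by
      simp only [mapWalk, SimpleGraph.Walk.support_nil, List.mem_singleton]
      exact hx
  | _, _, @SimpleGraph.Walk.cons _ _ _ c _ h q, hx => by
      have h1 := hav h
      have h2 : v ≠ φ c := fun e => h1 (e ▸ (σ (hK h)).end_mem_support)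
      have h3 := mapWalk_avoid v hav q h2
      simp only [mapWalk, SimpleGraph.Walk.mem_support_append_iff]
      exact fun hc => hc.elim h1 h3

end walkmap

end Stmt4Aux

/-- `H` is 2-connected: it has at least three vertices and deleting any single vertex
leaves it connected. -/
def IsTwoConnected {V : Type} (H : SimpleGraph V) : Prop :=
  3 ≤ Nat.card V ∧ ∀ u : V, (H.induce {w | w ≠ u}).Connected

namespace Stmt4Aux

lemma topminor_induce {VH VG : Type} (H : SimpleGraph VH) (G : SimpleGraph VG) (S : Set VG)
    (φ : VH → VG) (σ : ∀ ⦃x y : VH⦄, H.Adj x y → G.Walk (φ x) (φ y))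
    (hinj : Function.Injective φ)
    (hpath : ∀ ⦃x y : VH⦄ (h : H.Adj x y), (σ h).IsPath)
    (hdisj : ∀ ⦃x y x' y' : VH⦄ (h : H.Adj x y) (h' : H.Adj x' y'),
      s(x, y) ≠ s(x', y') → ∀ w, w ∈ (σ h).support → w ∈ (σ h').support →
        (w = φ x ∨ w = φ y) ∧ (w = φ x' ∨ w = φ y'))
    (hφ : ∀ x, φ x ∈ S)
    (hsupp : ∀ ⦃x y : VH⦄ (h : H.Adj x y), ∀ w ∈ (σ h).support, w ∈ S) :
    TopMinorOf H (G.induce S) := by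
  refine ⟨fun x => ⟨φ x, hφ x⟩,
    fun x y h => toInduce (σ h) (hφ x) (hφ y) (hsupp h), ?_, ?_, ?_⟩
  · intro a b hab
    exact hinj (congrArg Subtype.val hab)
  · intro x y h
    rw [SimpleGraph.Walk.isPath_def]
    have hnd : (σ h).support.Nodup := (SimpleGraph.Walk.isPath_def _).mp (hpath h)
    have hmap := toInduce_support (σ h) (hφ x) (hφ y) (hsupp h)
    exact List.Nodup.of_map Subtype.val (hmap ▸ hnd)
  · intro x y x' y' h h' hne w hw hw'
    have hw1 : (w : VG) ∈ (σ h).support := by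
      rw [← toInduce_support (σ h) (hφ x) (hφ y) (hsupp h)]
      exact List.mem_map_of_mem hw
    have hw2 : (w : VG) ∈ (σ h').support := by
      rw [← toInduce_support (σ h') (hφ x') (hφ y') (hsupp h')]
      exact List.mem_map_of_mem hw'
    have hd := hdisj h h' hne w hw1 hw2
    constructor
    · rcases hd.1 with e | e
      · exact Or.inl (Subtype.ext e)
      · exact Or.inr (Subtype.ext e)
    · rcases hd.2 with e | e
      · exact Or.inl (Subtype.ext e)
      · exact Or.inr (Subtype.ext e)

end Stmt4Aux

/-- Let `i ≥ 2`, let `G` be a connected graph with cut vertex `v`, and let `Vs` be the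
vertex set of a connected component of `G ∖ {v}`. If `H` is 2-connected, `H` is a
topological minor of `G`, and `H` is not a topological minor of `G[Vs ∪ {v}]`, then
`H` is a topological minor of `G ∖ Vs`. -/
theorem stmt4 {VH VG : Type} [Fintype VH] [Fintype VG]
    (H : SimpleGraph VH) (i : ℕ) (hi : 2 ≤ i)
    (G : SimpleGraph VG) (hG : G.Connected)
    (v : VG) (hv : IsCutVertex G v)
    (Vs : Set VG)
    (hVne : Vs.Nonempty)
    (hVv : ∀ u ∈ Vs, u ≠ v)
    (hVconn : (G.induce Vs).Connected)
    (hVcomp : ∀ u ∈ Vs, ∀ w, w ∉ Vs → w ≠ v → ¬ G.Adj u w)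
    (hH2 : IsTwoConnected H)
    (htm : TopMinorOf H G)
    (hnot : ¬ TopMinorOf H (G.induce (Vs ∪ {v}))) :
    TopMinorOf H (G.induce {u | u ∉ Vs}) := by
  classical
  obtain ⟨φ, σ, hinj, hpath, hdisj⟩ := htm
  have hvVs : v ∉ Vs := fun h => hVv v h rfl
  have hclVs : ∀ ⦃a b : VG⦄, G.Adj a b → a ∈ Vs → a ≠ v → b ≠ v → b ∈ Vs := by
    intro a b hab ha _ hbv
    by_contra hb
    exact hVcomp a ha b hb hbv hab
  by_cases hout : ∀ x, φ x ∉ Vs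
  · refine Stmt4Aux.topminor_induce H G _ φ σ hinj hpath hdisj hout ?_
    intro x y h
    refine Stmt4Aux.path_stay (v := v) ?_ ?_ (σ h) (hpath h) (hout x) (hout y)
    · intro a b hab ha hav hb
      exact hVcomp b hb a ha hav hab.symm
    · intro a b hab ha hav hbv hb
      rw [Set.mem_setOf_eq, not_not] at ha
      rw [Set.mem_setOf_eq] at hb
      exact hVcomp a ha b hb hbv hab
  push_neg at hout
  obtain ⟨x0, hx0⟩ := hout
  by_cases hin : ∀ x, φ x ∈ Vs ∪ {v}
  · refine absurd (Stmt4Aux.topminor_induce H G _ φ σ hinj hpath hdisj hin ?_) hnot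
    intro x y h
    refine Stmt4Aux.path_stay (v := v) ?_ ?_ (σ h) (hpath h) (hin x) (hin y)
    · intro a b hab ha hav
      have haVs : a ∈ Vs := by
        rcases ha with h1 | h1
        · exact h1
        · exact absurd h1 hav
      by_contra hb
      simp only [Set.mem_union, Set.mem_singleton_iff, not_or] at hb
      exact hVcomp a haVs b hb.1 hb.2 hab
    · intro a b hab ha hav hbv hb
      have haVs : a ∉ Vs := fun h1 => ha (Or.inl h1)
      have hbVs : b ∈ Vs := by
        rcases hb with h1 | h1
        · exact h1
        · exact absurd h1 hbv
      exact hVcomp b hbVs a haVs hav hab.symm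
  push_neg at hin
  obtain ⟨y0, hy0⟩ := hin
  exfalso
  simp only [Set.mem_union, Set.mem_singleton_iff, not_or] at hy0
  obtain ⟨hy0Vs, hy0v⟩ := hy0
  have hcard : 3 ≤ Fintype.card VH := by
    rw [← Nat.card_eq_fintype_card]; exact hH2.1
  have hthird : ∀ a b : VH, ∃ c, c ≠ a ∧ c ≠ b := by
    intro a b
    by_contra hcon
    push_neg at hcon
    have hsub : (Finset.univ : Finset VH) ⊆ {a, b} := by
      intro c _
      simp only [Finset.mem_insert, Finset.mem_singleton]
      rcases eq_or_ne c a with h | h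
      · exact Or.inl h
      · exact Or.inr (hcon c h)
    have h1 : Fintype.card VH ≤ ({a, b} : Finset VH).card := by
      rw [← Finset.card_univ]; exact Finset.card_le_card hsub
    have h2 : ({a, b} : Finset VH).card ≤ 2 :=
      (Finset.card_insert_le a {b}).trans (by simp)
    omega
  have keyH : ∀ (c : VH) {x y : VH}, x ≠ c → y ≠ c → H.Reachable x y := by
    intro c x y hx hy
    have hr := (hH2.2 c).preconnected ⟨x, hx⟩ ⟨y, hy⟩
    exact hr.map ⟨Subtype.val, fun {a b} hab => hab⟩
  have hnbr : ∀ u : VH, ∃ w, H.Adj u w := by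
    intro u
    obtain ⟨w, hw1, _⟩ := hthird u u
    obtain ⟨c, hc1, hc2⟩ := hthird u w
    obtain ⟨p⟩ := keyH c (Ne.symm hc1) (Ne.symm hc2)
    cases p with
    | nil => exact absurd rfl hw1
    | cons h _ => exact ⟨_, h⟩
  -- the graph of "good" edges
  let K : SimpleGraph VH :=
    { Adj := fun x y => ∃ h : H.Adj x y, v ∉ (σ h).support ∧ v ∉ (σ h.symm).support
      symm := by
        refine ⟨fun x y hxy => ?_⟩
        obtain ⟨h, h1, h2⟩ := hxy
        exact ⟨h.symm, h2, h1⟩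
      loopless := by
        refine ⟨fun x hx => ?_⟩
        obtain ⟨h, -, -⟩ := hx
        exact H.irrefl h }
  have hK : ∀ ⦃x y : VH⦄, K.Adj x y → H.Adj x y := fun x y h => h.choose
  have hav : ∀ ⦃x y : VH⦄ (h : K.Adj x y), v ∉ (σ (hK h)).support :=
    fun x y h => h.choose_spec.1
  have keyK : ∀ (c : VH), (∀ ⦃a b : VH⦄, H.Adj a b → a ≠ c → b ≠ c → K.Adj a b) →
      ∀ {x y : VH}, x ≠ c → y ≠ c → K.Reachable x y := by
    intro c hc x y hx hy
    have hr := (hH2.2 c).preconnected ⟨x, hx⟩ ⟨y, hy⟩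
    exact hr.map ⟨Subtype.val, fun {a b} hab => hc hab a.2 b.2⟩
  have hreach : K.Reachable x0 y0 := by
    by_cases hA : ∃ u, φ u = v
    · obtain ⟨u, hu⟩ := hA
      have hedge : ∀ ⦃x y : VH⦄ (h : H.Adj x y), x ≠ u → y ≠ u → v ∉ (σ h).support := by
        intro x y h hx hy hvin
        obtain ⟨w0, hw0⟩ := hnbr u
        have hne : s(x, y) ≠ s(u, w0) := by
          intro e
          rw [Sym2.eq_iff] at e
          rcases e with ⟨e1, _⟩ | ⟨_, e2⟩
          · exact hx e1
          · exact hy e2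
        have hv' : v ∈ (σ hw0).support := hu ▸ (σ hw0).start_mem_support
        rcases (hdisj h hw0 hne v hvin hv').1 with e | e
        · exact hx (hinj (hu.trans e)).symm
        · exact hy (hinj (hu.trans e)).symm
      have hcu : ∀ ⦃a b : VH⦄, H.Adj a b → a ≠ u → b ≠ u → K.Adj a b :=
        fun a b h ha hb => ⟨h, hedge h ha hb, hedge h.symm hb ha⟩
      have hx0u : x0 ≠ u := by
        intro e
        apply hvVs
        rw [← hu, ← e]
        exact hx0
      have hy0u : y0 ≠ u := fun e => hy0v (by rw [e, hu])
      exact keyK u hcu hx0u hy0u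
    · push_neg at hA
      by_cases hB : ∃ (a b : VH) (hab : H.Adj a b), v ∈ (σ hab).support
      · obtain ⟨a, b, hab, hvab⟩ := hB
        have huniq : ∀ ⦃x y : VH⦄ (h : H.Adj x y), v ∈ (σ h).support → s(x, y) = s(a, b) := by
          intro x y h hvw
          by_contra hne
          rcases (hdisj h hab hne v hvw hvab).1 with e | e
          · exact hA x e.symm
          · exact hA y e.symm
        have hgen : ∀ (z : VH), (z = a ∨ z = b) →
            ∀ ⦃x y : VH⦄, H.Adj x y → x ≠ z → y ≠ z → K.Adj x y := by
          intro z hz x y h hx hy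
          refine ⟨h, ?_, ?_⟩
          · intro hvin
            have e := huniq h hvin
            rw [Sym2.eq_iff] at e
            rcases hz with rfl | rfl
            · rcases e with ⟨e1, _⟩ | ⟨_, e2⟩
              · exact hx e1
              · exact hy e2
            · rcases e with ⟨_, e2⟩ | ⟨e1, _⟩
              · exact hy e2
              · exact hx e1
          · intro hvin
            have e := huniq h.symm hvin
            rw [Sym2.eq_iff] at e
            rcases hz with rfl | rfl
            · rcases e with ⟨e1, _⟩ | ⟨_, e2⟩
              · exact hy e1
              · exact hx e2
            · rcases e with ⟨_, e2⟩ | ⟨e1, _⟩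
              · exact hx e2
              · exact hy e1
        obtain ⟨c, hc1, hc2⟩ := hthird a b
        have habne : a ≠ b := hab.ne
        have hrx : ∀ z : VH, K.Reachable z c := by
          intro z
          by_cases hza : z = a
          · subst hza
            exact keyK b (hgen b (Or.inr rfl)) habne hc2
          · exact keyK a (hgen a (Or.inl rfl)) hza hc1
        exact (hrx x0).trans (hrx y0).symm
      · push_neg at hB
        rcases eq_or_ne x0 y0 with rfl | hne
        · exact SimpleGraph.Reachable.refl x0
        · obtain ⟨c, hc1, hc2⟩ := hthird x0 y0
          exact keyK c (fun a b h _ _ => ⟨h, hB a b h, hB b a h.symm⟩)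
            (Ne.symm hc1) (Ne.symm hc2)
  obtain ⟨p⟩ := hreach
  have hvp : v ∉ (Stmt4Aux.mapWalk φ σ hK p).support :=
    Stmt4Aux.mapWalk_avoid φ σ hK v hav p (fun e => hvVs (by rw [e]; exact hx0))
  have hstay := Stmt4Aux.stay_aux (T := Vs) hclVs (Stmt4Aux.mapWalk φ σ hK p) hvp hx0
    (φ y0) (SimpleGraph.Walk.end_mem_support _)
  exact hy0Vs hstay
end

section
/- For any two finite graphs H and H′, if besf_H ≺ besf_{H′}, then H′ is not a minor of H. Here besf_G : ℕ → ℕ is the block edge size function of G, mapping x to the number of edges of G contained in a block with at least x edges, and f ≺ g means there exists x₀ with f(x₀) < g(x₀) and f(x) ≤ g(x) for all x ≥ x₀. -/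
/-- The block edge size function: `besf H x` is the number of edges of `H` that are
contained in a block of `H` with at least `x` edges. -/
noncomputable def besf {V : Type} (H : SimpleGraph V) (x : ℕ) : ℕ :=
  {e : Sym2 V | e ∈ H.edgeSet ∧ ∃ B : Set V, IsBlockSet H B ∧
    x ≤ (H.induce B).edgeSet.ncard ∧ ∀ v ∈ e, v ∈ B}.ncard

/-- `f ≺ g`: there exists a witness `x₀` with `f x₀ < g x₀` and `f x ≤ g x` for every
`x ≥ x₀`. -/
def BesfLT (f g : ℕ → ℕ) : Prop :=
  ∃ x₀ : ℕ, f x₀ < g x₀ ∧ ∀ x, x₀ ≤ x → f x ≤ g x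

open SimpleGraph

section AuxiliaryLemmas

lemma aux_induce_del_iff {V : Type} (H : SimpleGraph V) (s : Set V) (v : ↥s) :
    ((H.induce s).induce {u | u ≠ v}).Connected ↔ (H.induce (s \ {v.1})).Connected := by
  have iso : ((H.induce s).induce {u | u ≠ v}) ≃g H.induce (s \ {v.1}) := by
    refine ⟨⟨fun z => ⟨z.1.1, z.1.2, fun h => z.2 (Subtype.ext (by exact h))⟩,
      fun z => ⟨⟨z.1, z.2.1⟩, fun h => z.2.2 (by exact congrArg Subtype.val h)⟩, ?_, ?_⟩, ?_⟩
    · intro z; rfl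
    · intro z; rfl
    · intro a b; simp [comap_adj]
  exact iso.connected_iff

lemma aux_cut_lemma {V : Type} (H : SimpleGraph V) (s K : Set V) (a : V) (ha : a ∈ s)
    (hconn : (H.induce s).Connected) (haK : a ∉ K)
    (hcl : ∀ p ∈ K, ∀ q ∈ s, q ≠ a → H.Adj p q → q ∈ K) :
    (H.induce (s \ K)).Connected := by
  have key : ∀ (p q : ↥s) (_ : (H.induce s).Walk p q) (hp : p.1 ∉ K) (_ : q.1 = a),
      (H.induce (s \ K)).Reachable ⟨p.1, p.2, hp⟩ ⟨a, ha, haK⟩ := by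
    intro p q w
    induction w with
    | nil =>
      intro hp hq
      subst hq
      exact Reachable.refl _
    | @cons p q _ hadj w ih =>
      intro hp hqa
      by_cases hpa : p.1 = a
      · have h2 : (⟨p.1, p.2, hp⟩ : ↥(s \ K)) = ⟨a, ha, haK⟩ := Subtype.ext hpa
        rw [h2]
      · have hqK : q.1 ∉ K := by
          intro hq
          exact hp (hcl q.1 hq p.1 p.2 hpa (by simpa using hadj.symm))
        have hadj' : (H.induce (s \ K)).Adj ⟨p.1, p.2, hp⟩ ⟨q.1, q.2, hqK⟩ := by
          simpa using hadj
        exact hadj'.reachable.trans (ih hqK hqa)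
  rw [connected_iff]
  refine ⟨?_, ⟨⟨a, ha, haK⟩⟩⟩
  rintro ⟨z₁, hz₁⟩ ⟨z₂, hz₂⟩
  obtain ⟨w₁⟩ := hconn.preconnected ⟨z₁, hz₁.1⟩ ⟨a, ha⟩
  obtain ⟨w₂⟩ := hconn.preconnected ⟨z₂, hz₂.1⟩ ⟨a, ha⟩
  exact (key _ _ w₁ hz₁.2 rfl).trans (key _ _ w₂ hz₂.2 rfl).symm

lemma aux_blowup_connected {V V' : Type} (H : SimpleGraph V) (H' : SimpleGraph V')
    (D : Set V') (ψ : V' → Set V)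
    (hD : (H'.induce D).Connected)
    (hne : ∀ v ∈ D, (ψ v).Nonempty)
    (hc : ∀ v ∈ D, (H.induce (ψ v)).Connected)
    (he : ∀ x ∈ D, ∀ y ∈ D, H'.Adj x y → ∃ u ∈ ψ x, ∃ w ∈ ψ y, H.Adj u w) :
    (H.induce (⋃ v ∈ D, ψ v)).Connected := by
  set S := ⋃ v ∈ D, ψ v with hS
  have hsub : ∀ v ∈ D, ψ v ⊆ S := fun v hv => Set.subset_biUnion_of_mem hv
  have memS : ∀ {v : V'} {z : V}, v ∈ D → z ∈ ψ v → z ∈ S :=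
    fun hv hz => hsub _ hv hz
  have key : ∀ (p q : ↥D) (_ : (H'.induce D).Walk p q),
      ∀ a (ha : a ∈ ψ p.1), ∀ b (hb : b ∈ ψ q.1),
      (H.induce S).Reachable ⟨a, memS p.2 ha⟩ ⟨b, memS q.2 hb⟩ := by
    intro p q w
    induction w with
    | nil =>
      intro a ha b hb
      have := ((hc _ (by exact Subtype.prop _)).preconnected ⟨a, ha⟩ ⟨b, hb⟩)
      exact this.map (H.induceHomOfLE (hsub _ (Subtype.prop _))).toHom
    | @cons p r _ hadj w ih =>
      intro a ha b hb
      have hpr : H'.Adj p.1 r.1 := by simpa using hadj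
      obtain ⟨u, hu, ww, hww, huw⟩ := he p.1 p.2 r.1 r.2 hpr
      have r1 : (H.induce S).Reachable ⟨a, memS p.2 ha⟩ ⟨u, memS p.2 hu⟩ :=
        ((hc p.1 p.2).preconnected ⟨a, ha⟩ ⟨u, hu⟩).map
          (H.induceHomOfLE (hsub p.1 p.2)).toHom
      have r2 : (H.induce S).Adj ⟨u, memS p.2 hu⟩ ⟨ww, memS r.2 hww⟩ := by simpa using huw
      exact (r1.trans r2.reachable).trans (ih ww hww b hb)
  rw [connected_iff]
  constructor
  · rintro ⟨z₁, hz₁⟩ ⟨z₂, hz₂⟩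
    have hz₁' := hz₁; have hz₂' := hz₂
    simp only [hS, Set.mem_iUnion] at hz₁' hz₂'
    obtain ⟨v₁, hv₁, hzv₁⟩ := hz₁'
    obtain ⟨v₂, hv₂, hzv₂⟩ := hz₂'
    obtain ⟨w⟩ := hD.preconnected ⟨v₁, hv₁⟩ ⟨v₂, hv₂⟩
    exact key _ _ w z₁ hzv₁ z₂ hzv₂
  · obtain ⟨⟨v, hv⟩⟩ := hD.nonempty
    obtain ⟨z, hz⟩ := hne v hv
    exact ⟨⟨z, memS hv hz⟩⟩

lemma aux_exists_minimal_subset {V : Type} [Fintype V] (P : Set V → Prop) :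
    ∀ (n : ℕ) (s : Set V), s.ncard ≤ n → P s →
      ∃ t, t ⊆ s ∧ P t ∧ ∀ t', t' ⊆ t → P t' → t' = t := by
  intro n
  induction n with
  | zero =>
    intro s hs hP
    have hse : s = ∅ := by
      rw [← Set.ncard_eq_zero s.toFinite]; omega
    refine ⟨s, subset_rfl, hP, fun t' ht' _ => ?_⟩
    subst hse
    exact Set.subset_empty_iff.mp ht'
  | succ n ih =>
    intro s hs hP
    by_cases h : ∀ t', t' ⊆ s → P t' → t' = s
    · exact ⟨s, subset_rfl, hP, h⟩
    · push_neg at h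
      obtain ⟨t', ht's, hPt', hnet⟩ := h
      have hss : t' ⊂ s := ht's.ssubset_of_ne hnet
      have : t'.ncard < s.ncard := Set.ncard_lt_ncard hss s.toFinite
      obtain ⟨t, hts, h1, h2⟩ := ih t' (by omega) hPt'
      exact ⟨t, hts.trans ht's, h1, h2⟩

lemma aux_exists_block_extension {V : Type} [Fintype V] (H : SimpleGraph V) :
    ∀ (n : ℕ) (S : Set V), Fintype.card V - S.ncard ≤ n →
      IsBiconnected (H.induce S) →
      ∃ B, S ⊆ B ∧ IsBlockSet H B := by
  intro n
  induction n with
  | zero =>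
    intro S hn hS
    refine ⟨S, subset_rfl, hS, fun B' hB' hPB' => ?_⟩
    have h1 : S.ncard ≤ B'.ncard := Set.ncard_le_ncard hB' B'.toFinite
    have h2 : B'.ncard ≤ Fintype.card V := by
      simpa [Set.ncard_univ] using Set.ncard_le_ncard (Set.subset_univ B') Set.finite_univ
    exact (Set.eq_of_subset_of_ncard_le hB' (by omega) B'.toFinite).symm ▸ rfl
  | succ n ih =>
    intro S hn hS
    by_cases h : ∀ B', S ⊆ B' → IsBiconnected (H.induce B') → B' = S
    · exact ⟨S, subset_rfl, hS, h⟩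
    · push_neg at h
      obtain ⟨B', hSB', hPB', hneB⟩ := h
      have hss : S ⊂ B' := hSB'.ssubset_of_ne (fun h => hneB h.symm)
      have hlt : S.ncard < B'.ncard := Set.ncard_lt_ncard hss B'.toFinite
      have h2 : B'.ncard ≤ Fintype.card V := by
        simpa [Set.ncard_univ] using Set.ncard_le_ncard (Set.subset_univ B') Set.finite_univ
      obtain ⟨B, hB1, hB2⟩ := ih B' (by omega) hPB'
      exact ⟨B, hSB'.trans hB1, hB2⟩

lemma aux_edge_card_eq {V : Type} (H : SimpleGraph V) (s : Set V) :
    (H.induce s).edgeSet.ncard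
      = {e : Sym2 V | e ∈ H.edgeSet ∧ ∀ v ∈ e, v ∈ s}.ncard := by
  have hinj : Function.Injective (Sym2.map (Subtype.val : ↥s → V)) :=
    Sym2.map.injective Subtype.val_injective
  rw [← Set.ncard_image_of_injective _ hinj]
  congr 1
  ext e
  constructor
  · rintro ⟨e₀, he₀, rfl⟩
    revert he₀
    refine Sym2.ind (fun a b => ?_) e₀
    intro hab
    rw [mem_edgeSet] at hab
    have hab' : H.Adj a.1 b.1 := by simpa using hab
    refine ⟨by simpa using hab', ?_⟩
    intro v hv
    rw [Sym2.map_pair_eq, Sym2.mem_iff] at hv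
    rcases hv with rfl | rfl
    · exact a.2
    · exact b.2
  · refine Sym2.ind (fun a b => ?_) e
    rintro ⟨he, hmem⟩
    rw [mem_edgeSet] at he
    have ha : a ∈ s := hmem a (Sym2.mem_mk_left a b)
    have hb : b ∈ s := hmem b (Sym2.mem_mk_right a b)
    refine ⟨s(⟨a, ha⟩, ⟨b, hb⟩), ?_, by rw [Sym2.map_pair_eq]⟩
    rw [mem_edgeSet]
    simpa using he

end AuxiliaryLemmas

/-- Monotonicity of besf under the minor relation. -/
lemma besf_le_besf_of_minor {V V' : Type} [Fintype V] [Fintype V']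
    (H : SimpleGraph V) (H' : SimpleGraph V')
    (hm : MinorOf H' H) (x : ℕ) : besf H' x ≤ besf H x := by
  obtain ⟨φ, hφne, hφconn, hφdisj, hφadj⟩ := hm
  classical
  haveI : Finite (Sym2 V) :=
    Finite.of_surjective (fun p : V × V => Sym2.mk p.1 p.2)
      (fun e => Sym2.ind (fun a b => ⟨(a, b), rfl⟩) e)
  rw [besf, besf]
  set A' : Set (Sym2 V') := {e : Sym2 V' | e ∈ H'.edgeSet ∧ ∃ B : Set V', IsBlockSet H' B ∧
    x ≤ (H'.induce B).edgeSet.ncard ∧ ∀ v ∈ e, v ∈ B} with hA'def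
  set A : Set (Sym2 V) := {e : Sym2 V | e ∈ H.edgeSet ∧ ∃ B : Set V, IsBlockSet H B ∧
    x ≤ (H.induce B).edgeSet.ncard ∧ ∀ v ∈ e, v ∈ B} with hAdef
  rcases Set.eq_empty_or_nonempty A' with hA'e | hA'ne
  · simp [hA'e]
  -- `V` is nonempty
  obtain ⟨e₁, he₁⟩ := hA'ne
  have hVne : Nonempty V := by
    have he₁' : e₁ ∈ H'.edgeSet := he₁.1
    revert he₁'
    refine Sym2.ind (fun p q => ?_) e₁
    intro h
    obtain ⟨u, hu, _⟩ := hφadj p q (H'.mem_edgeSet.mp h)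
    exact ⟨u⟩
  have hφinj : ∀ {z : V} {p q : V'}, z ∈ φ p → z ∈ φ q → p = q := by
    intro z p q hp hq
    by_contra hpq
    exact Set.disjoint_left.mp (hφdisj p q hpq) hp hq
  -- choose an `H`-edge for each `H'`-edge
  have hPall : ∀ e' ∈ H'.edgeSet, ∃ p q u w,
      e' = s(p, q) ∧ u ∈ φ p ∧ w ∈ φ q ∧ H.Adj u w := by
    intro e'
    refine Sym2.ind (fun p q => ?_) e'
    intro h
    obtain ⟨u, hu, w, hw, huw⟩ := hφadj p q (H'.mem_edgeSet.mp h)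
    exact ⟨p, q, u, w, rfl, hu, hw, huw⟩
  choose pf qf uf wf hEq hU hW hA using hPall
  haveI : Nonempty (Sym2 V) := ⟨s(Classical.arbitrary V, Classical.arbitrary V)⟩
  set c : Sym2 V' → Sym2 V := fun e' =>
    if h : e' ∈ H'.edgeSet then s(uf e' h, wf e' h) else Classical.arbitrary _ with hcdef
  have hcval : ∀ e' (h : e' ∈ H'.edgeSet), c e' = s(uf e' h, wf e' h) := by
    intro e' h; simp [hcdef, dif_pos h]
  -- injectivity of `c` on edges
  have hcinj : Set.InjOn c H'.edgeSet := by
    intro e₁ h₁ e₂ h₂ hc12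
    rw [hcval e₁ h₁, hcval e₂ h₂, Sym2.eq_iff] at hc12
    rw [hEq e₁ h₁, hEq e₂ h₂]
    rcases hc12 with ⟨hu12, hw12⟩ | ⟨huw, hwu⟩
    · have hp : pf e₁ h₁ = pf e₂ h₂ := hφinj (hU e₁ h₁) (hu12 ▸ hU e₂ h₂)
      have hq : qf e₁ h₁ = qf e₂ h₂ := hφinj (hW e₁ h₁) (hw12 ▸ hW e₂ h₂)
      rw [hp, hq]
    · have hp : pf e₁ h₁ = qf e₂ h₂ := hφinj (hU e₁ h₁) (huw ▸ hW e₂ h₂)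
      have hq : qf e₁ h₁ = pf e₂ h₂ := hφinj (hW e₁ h₁) (hwu ▸ hU e₂ h₂)
      rw [hp, hq, Sym2.eq_swap]
  -- the key mapping property
  have hmaps : ∀ e' ∈ A', c e' ∈ A := by
    rintro e'₀ ⟨he'₀, B', hB'block, hxcard, hend⟩
    obtain ⟨⟨hBconn, hBcard, hBdel⟩, _⟩ := hB'block
    -- edges of `H'` inside `B'`
    set E' : Set (Sym2 V') := {e : Sym2 V' | e ∈ H'.edgeSet ∧ ∀ v ∈ e, v ∈ B'} with hE'def
    have he'₀E : e'₀ ∈ E' := ⟨he'₀, hend⟩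
    have hpfB : ∀ e (he : e ∈ E'), pf e he.1 ∈ B' := by
      intro e he
      refine he.2 _ ?_
      have h1 := Sym2.mem_mk_left (pf e he.1) (qf e he.1)
      rwa [← hEq e he.1] at h1
    have hqfB : ∀ e (he : e ∈ E'), qf e he.1 ∈ B' := by
      intro e he
      refine he.2 _ ?_
      have h1 := Sym2.mem_mk_right (pf e he.1) (qf e he.1)
      rwa [← hEq e he.1] at h1
    -- attachment points
    set At : V' → Set V := fun v => {z | ∃ e, ∃ he : e ∈ E',
      (v = pf e he.1 ∧ z = uf e he.1) ∨ (v = qf e he.1 ∧ z = wf e he.1)} with hAtdef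
    have hAtφ : ∀ v, At v ⊆ φ v := by
      rintro v z ⟨e, he, (⟨rfl, rfl⟩ | ⟨rfl, rfl⟩)⟩
      · exact hU e he.1
      · exact hW e he.1
    -- minimal connected supersets of attachment points
    have hseed : ∀ v : V', (φ v ⊆ φ v ∧ At v ⊆ φ v ∧ (H.induce (φ v)).Connected ∧
        (φ v).Nonempty) := fun v => ⟨subset_rfl, hAtφ v, hφconn v, hφne v⟩
    have hψex : ∀ v : V', ∃ t, t ⊆ φ v ∧
        (t ⊆ φ v ∧ At v ⊆ t ∧ (H.induce t).Connected ∧ t.Nonempty) ∧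
        ∀ t', t' ⊆ t → (t' ⊆ φ v ∧ At v ⊆ t' ∧ (H.induce t').Connected ∧ t'.Nonempty) →
          t' = t := by
      intro v
      exact aux_exists_minimal_subset _ (φ v).ncard (φ v) le_rfl (hseed v)
    choose ψ hψφ hψQ hψmin using hψex
    have hψAt : ∀ v, At v ⊆ ψ v := fun v => (hψQ v).2.1
    have hψconn : ∀ v, (H.induce (ψ v)).Connected := fun v => (hψQ v).2.2.1
    have hψne : ∀ v, (ψ v).Nonempty := fun v => (hψQ v).2.2.2
    set S : Set V := ⋃ v ∈ B', ψ v with hSdef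
    have hψS : ∀ v ∈ B', ψ v ⊆ S := fun v hv => Set.subset_biUnion_of_mem hv
    -- edge condition for the blowup
    have hedge : ∀ p ∈ B', ∀ q ∈ B', H'.Adj p q →
        ∃ u ∈ ψ p, ∃ w ∈ ψ q, H.Adj u w := by
      intro p hp q hq hpq
      have heE : s(p, q) ∈ E' := by
        refine ⟨H'.mem_edgeSet.mpr hpq, ?_⟩
        intro v hv
        rcases Sym2.mem_iff.mp hv with rfl | rfl
        · exact hp
        · exact hq
      have h1 := hEq s(p, q) heE.1
      rcases Sym2.eq_iff.mp h1 with ⟨hpp, hqq⟩ | ⟨hpq', hqp⟩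
      · refine ⟨uf _ heE.1, hψAt p ⟨_, heE, Or.inl ⟨hpp, rfl⟩⟩,
          wf _ heE.1, hψAt q ⟨_, heE, Or.inr ⟨hqq, rfl⟩⟩, hA _ heE.1⟩
      · refine ⟨wf _ heE.1, hψAt p ⟨_, heE, Or.inr ⟨hpq', rfl⟩⟩,
          uf _ heE.1, hψAt q ⟨_, heE, Or.inl ⟨hqp, rfl⟩⟩, (hA _ heE.1).symm⟩
    -- S is connected
    have hSconn : (H.induce S).Connected :=
      aux_blowup_connected H H' B' ψ hBconn (fun v _ => hψne v)
        (fun v _ => hψconn v) hedge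
    -- S has at least two elements
    have hu₀S : uf e'₀ he'₀ ∈ S :=
      hψS _ (hpfB e'₀ he'₀E) (hψAt _ ⟨e'₀, he'₀E, Or.inl ⟨rfl, rfl⟩⟩)
    have hw₀S : wf e'₀ he'₀ ∈ S :=
      hψS _ (hqfB e'₀ he'₀E) (hψAt _ ⟨e'₀, he'₀E, Or.inr ⟨rfl, rfl⟩⟩)
    have hScard : 2 ≤ Nat.card ↥S := by
      rw [Nat.card_coe_set_eq]
      have : 1 < S.ncard := by
        rw [Set.one_lt_ncard_iff S.toFinite]
        exact ⟨_, _, hu₀S, hw₀S, (hA e'₀ he'₀).ne⟩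
      omega
    -- deletion connectivity for S
    have hSdel : ∀ a ∈ S, (H.induce (S \ {a})).Connected := by
      intro a ha
      have ha' := ha
      simp only [hSdef, Set.mem_iUnion] at ha'
      obtain ⟨v, hvB, hav⟩ := ha'
      -- the rest of the blowup
      set R : Set V := ⋃ w ∈ B' \ {v}, ψ w with hRdef
      have hRS : R ⊆ S \ {a} := by
        intro z hz
        simp only [hRdef, Set.mem_iUnion] at hz
        obtain ⟨w, hwB, hzw⟩ := hz
        refine ⟨hψS w hwB.1 hzw, ?_⟩
        intro hza
        rw [Set.mem_singleton_iff] at hza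
        subst hza
        exact hwB.2 (hφinj (hψφ w hzw) (hψφ v hav))
      have hBvconn : (H'.induce (B' \ {v})).Connected :=
        (aux_induce_del_iff H' B' ⟨v, hvB⟩).mp (hBdel ⟨v, hvB⟩)
      have hRconn : (H.induce R).Connected :=
        aux_blowup_connected H H' (B' \ {v}) ψ hBvconn (fun w _ => hψne w)
          (fun w _ => hψconn w) (fun p hp q hq => hedge p hp.1 q hq.1)
      -- a base point in R
      have hBcard' : 1 < B'.ncard := by
        rw [← Nat.card_coe_set_eq]; omega
      obtain ⟨w₀, hw₀B, hw₀v⟩ := Set.exists_ne_of_one_lt_ncard hBcard' v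
      obtain ⟨b₀, hb₀⟩ := hψne w₀
      have hb₀R : b₀ ∈ R := by
        simp only [hRdef, Set.mem_iUnion]
        exact ⟨w₀, ⟨hw₀B, hw₀v⟩, hb₀⟩
      have hb₀S : b₀ ∈ S \ {a} := hRS hb₀R
      -- every vertex of S \ {a} reaches b₀
      have reachb : ∀ z (hz : z ∈ S \ {a}),
          (H.induce (S \ {a})).Reachable ⟨z, hz⟩ ⟨b₀, hb₀S⟩ := by
        intro z hz
        have hz' := hz.1
        simp only [hSdef, Set.mem_iUnion] at hz'
        obtain ⟨w, hwB, hzw⟩ := hz'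
        by_cases hwv : w = v
        · subst hwv
          -- z is in the same branch set as a
          have hza : z ≠ a := hz.2
          set T : Set V := ψ w \ {a} with hTdef
          have hzT : z ∈ T := ⟨hzw, hza⟩
          have hTS : T ⊆ S \ {a} := fun p hp => ⟨hψS w hwB hp.1, hp.2⟩
          -- reachable set from z inside T
          set C : Set V := {p | ∃ hp : p ∈ T,
            (H.induce T).Reachable ⟨z, hzT⟩ ⟨p, hp⟩} with hCdef
          have hCT : C ⊆ T := fun p hp => hp.1
          have hzC : z ∈ C := ⟨hzT, Reachable.refl _⟩
          have haC : a ∉ C := fun h => (hCT h).2 rfl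
          -- some attachment point is in C
          have hAtC : ∃ z', z' ∈ At w ∧ z' ∈ C := by
            by_contra hno
            push_neg at hno
            have hcut : (H.induce (ψ w \ C)).Connected := by
              refine aux_cut_lemma H (ψ w) C a hav (hψconn w) haC ?_
              intro p hp q hq hqa hpq
              obtain ⟨hpT, hreach⟩ := hp
              have hqT : q ∈ T := ⟨hq, hqa⟩
              have : (H.induce T).Adj ⟨p, hpT⟩ ⟨q, hqT⟩ := by simpa using hpq
              exact ⟨hqT, hreach.trans this.reachable⟩
            have hQ : (ψ w \ C ⊆ φ w ∧ At w ⊆ ψ w \ C ∧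
                (H.induce (ψ w \ C)).Connected ∧ (ψ w \ C).Nonempty) := by
              refine ⟨(Set.diff_subset).trans (hψφ w), ?_, hcut, ⟨a, hav, haC⟩⟩
              intro z' hz'
              exact ⟨hψAt w hz', hno z' hz'⟩
            have := hψmin w (ψ w \ C) Set.diff_subset hQ
            have : z ∉ C := by
              have hzmem : z ∈ ψ w \ C := this.symm ▸ hzw
              exact hzmem.2
            exact this hzC
          obtain ⟨z', hz'At, hz'C⟩ := hAtC
          obtain ⟨hz'T, hreachz⟩ := hz'C
          -- the attachment point has a neighbour in R
          obtain ⟨e, he, hcase⟩ := hz'At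
          have hadjpq : H'.Adj (pf e he.1) (qf e he.1) := by
            have := he.1
            rw [hEq e he.1] at this
            exact H'.mem_edgeSet.mp this
          have hpartner : ∃ y, ∃ (hyB : y ∈ B'), y ≠ w ∧
              ∃ pt ∈ ψ y, H.Adj z' pt := by
            rcases hcase with ⟨hwp, hz'u⟩ | ⟨hwq, hz'w⟩
            · refine ⟨qf e he.1, hqfB e he, ?_, wf e he.1,
                hψAt _ ⟨e, he, Or.inr ⟨rfl, rfl⟩⟩, ?_⟩
              · rw [hwp]; exact fun h => hadjpq.ne h.symm
              · rw [hz'u]; exact hA e he.1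
            · refine ⟨pf e he.1, hpfB e he, ?_, uf e he.1,
                hψAt _ ⟨e, he, Or.inl ⟨rfl, rfl⟩⟩, ?_⟩
              · rw [hwq]; exact fun h => hadjpq.ne h
              · rw [hz'w]; exact (hA e he.1).symm
          obtain ⟨y, hyB, hyw, pt, hptψ, hz'pt⟩ := hpartner
          have hptR : pt ∈ R := by
            simp only [hRdef, Set.mem_iUnion]
            exact ⟨y, ⟨hyB, fun h => hyw h⟩, hptψ⟩
          have hptS : pt ∈ S \ {a} := hRS hptR
          have hz'S : z' ∈ S \ {a} := hTS hz'T
          -- chain the three reachabilities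
          have r1 : (H.induce (S \ {a})).Reachable ⟨z, hz⟩ ⟨z', hz'S⟩ := by
            have := hreachz.map (H.induceHomOfLE hTS).toHom
            exact this
          have r2 : (H.induce (S \ {a})).Adj ⟨z', hz'S⟩ ⟨pt, hptS⟩ := by
            simpa using hz'pt
          have r3 : (H.induce (S \ {a})).Reachable ⟨pt, hptS⟩ ⟨b₀, hb₀S⟩ := by
            have := (hRconn.preconnected ⟨pt, hptR⟩ ⟨b₀, hb₀R⟩).map
              (H.induceHomOfLE hRS).toHom
            exact this
          exact (r1.trans r2.reachable).trans r3
        · -- z is in another branch set, inside R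
          have hzR : z ∈ R := by
            simp only [hRdef, Set.mem_iUnion]
            exact ⟨w, ⟨hwB, hwv⟩, hzw⟩
          have := (hRconn.preconnected ⟨z, hzR⟩ ⟨b₀, hb₀R⟩).map
            (H.induceHomOfLE hRS).toHom
          exact this
      rw [connected_iff]
      refine ⟨?_, ⟨⟨b₀, hb₀S⟩⟩⟩
      rintro ⟨z₁, hz₁⟩ ⟨z₂, hz₂⟩
      exact (reachb z₁ hz₁).trans (reachb z₂ hz₂).symm
    -- S is biconnected
    have hSbic : IsBiconnected (H.induce S) := by
      refine ⟨hSconn, hScard, ?_⟩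
      intro v
      exact (aux_induce_del_iff H S v).mpr (hSdel v.1 v.2)
    -- extend S to a block of H
    obtain ⟨B, hSB, hBblock⟩ :=
      aux_exists_block_extension H (Fintype.card V) S (by omega) hSbic
    -- count edges
    have hE'card : x ≤ E'.ncard := by
      rw [← aux_edge_card_eq]; exact hxcard
    have hmapsE : ∀ e ∈ E', c e ∈ {e : Sym2 V | e ∈ H.edgeSet ∧ ∀ v ∈ e, v ∈ B} := by
      intro e he
      rw [hcval e he.1]
      refine ⟨H.mem_edgeSet.mpr (hA e he.1), ?_⟩
      intro v hv
      rcases Sym2.mem_iff.mp hv with rfl | rfl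
      · exact hSB (hψS _ (hpfB e he) (hψAt _ ⟨e, he, Or.inl ⟨rfl, rfl⟩⟩))
      · exact hSB (hψS _ (hqfB e he) (hψAt _ ⟨e, he, Or.inr ⟨rfl, rfl⟩⟩))
    have hEcard : E'.ncard ≤ {e : Sym2 V | e ∈ H.edgeSet ∧ ∀ v ∈ e, v ∈ B}.ncard :=
      Set.ncard_le_ncard_of_injOn c hmapsE
        (hcinj.mono (fun e he => he.1)) (Set.toFinite _)
    have hBxcard : x ≤ (H.induce B).edgeSet.ncard := by
      rw [aux_edge_card_eq]
      exact le_trans hE'card hEcard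
    -- conclude membership in A
    have hce : c e'₀ ∈ {e : Sym2 V | e ∈ H.edgeSet ∧ ∀ v ∈ e, v ∈ B} :=
      hmapsE e'₀ he'₀E
    exact ⟨hce.1, B, hBblock, hBxcard, hce.2⟩
  exact Set.ncard_le_ncard_of_injOn c hmaps
    (hcinj.mono (fun e he => he.1)) (Set.toFinite _)

/-- For finite graphs `H` and `H'`, if `besf H ≺ besf H'`, then `H'` is not a minor
of `H`. -/
theorem stmt6 {V V' : Type} [Fintype V] [Fintype V']
    (H : SimpleGraph V) (H' : SimpleGraph V')
    (hlt : BesfLT (besf H) (besf H')) :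
    ¬ MinorOf H' H := by
  intro hm
  obtain ⟨x₀, hx₀, _⟩ := hlt
  exact absurd (besf_le_besf_of_minor H H' hm x₀) (by omega)
end

section
/- Let G and G′ be graphs where G′ is obtained from G as follows: fix a graph H with two designated distinct adjacent vertices a and b; for each vertex v of G attach a disjoint copy of an induced subgraph A of H by identifying v with the copy of a; and for each edge e = {v, v′} of G delete e and add a disjoint copy of H's block B (containing a and b) identifying v with a and v′ with b. Then tw(G′) ≤ max{tw(G), tw(H)}, where tw denotes treewidth. -/
/-- `(tT, X)` is a tree decomposition of `G`: `tT` is a tree, every vertex of `G` lies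
in some bag, the endpoints of every edge of `G` lie in a common bag, and for every
vertex of `G` the set of nodes whose bags contain it induces a connected subtree. -/
def IsTreeDecomp {V T : Type} (G : SimpleGraph V) (tT : SimpleGraph T)
    (X : T → Set V) : Prop :=
  tT.IsTree ∧
  (∀ v, ∃ t, v ∈ X t) ∧
  (∀ u v, G.Adj u v → ∃ t, u ∈ X t ∧ v ∈ X t) ∧
  (∀ v, (tT.induce {t | v ∈ X t}).Connected)

/-- `G` has a tree decomposition of width at most `w`. -/
def TreewidthLE {V : Type} (G : SimpleGraph V) (w : ℕ) : Prop :=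
  ∃ (T : Type) (tT : SimpleGraph T) (X : T → Set V),
    IsTreeDecomp G tT X ∧ ∀ t, (X t).ncard ≤ w + 1

/-- The treewidth of `G`, as an extended natural number. -/
noncomputable def treewidth {V : Type} (G : SimpleGraph V) : ℕ∞ :=
  sInf ((fun w : ℕ => (w : ℕ∞)) '' {w : ℕ | TreewidthLE G w})

/-- The adjacency relation of the graph `G'` obtained from `G` by: attaching at each
vertex `v` of `G` a disjoint copy of the induced subgraph `H[A]` (identifying `v` with
the copy of `a`), and replacing each edge `{v, v'}` of `G` (oriented by `D`) by a
disjoint copy of the block `H[B]` (identifying `v` with `a` and `v'` with `b`). -/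
def GadgetRel {VG VH : Type} (G : SimpleGraph VG) (H : SimpleGraph VH)
    (a b : VH) (A B : Set VH) (D : VG → VG → Prop) :
    (VG ⊕ (VG × {x : VH // x ∈ A ∧ x ≠ a}) ⊕
      ({p : VG × VG // D p.1 p.2} × {x : VH // x ∈ B ∧ x ≠ a ∧ x ≠ b})) →
    (VG ⊕ (VG × {x : VH // x ∈ A ∧ x ≠ a}) ⊕
      ({p : VG × VG // D p.1 p.2} × {x : VH // x ∈ B ∧ x ≠ a ∧ x ≠ b})) → Prop
  | Sum.inl u, Sum.inl v => G.Adj u v ∧ H.Adj a b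
  | Sum.inl u, Sum.inr (Sum.inl (v, x)) => u = v ∧ H.Adj a x.val
  | Sum.inl u, Sum.inr (Sum.inr (p, x)) =>
      (u = p.val.1 ∧ H.Adj a x.val) ∨ (u = p.val.2 ∧ H.Adj b x.val)
  | Sum.inr (Sum.inl (v, x)), Sum.inr (Sum.inl (v', y)) => v = v' ∧ H.Adj x.val y.val
  | Sum.inr (Sum.inr (p, x)), Sum.inr (Sum.inr (p', y)) => p = p' ∧ H.Adj x.val y.val
  | _, _ => False


open SimpleGraph

set_option linter.unusedTactic false
set_option linter.unreachableTactic false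
set_option maxHeartbeats 1000000

lemma reach_of_pseudo_hom {V V' : Type*} {G : SimpleGraph V} {G' : SimpleGraph V'} (φ : V → V')
    (h : ∀ u v, G.Adj u v → φ u = φ v ∨ G'.Adj (φ u) (φ v)) {u v : V} (huv : G.Reachable u v) :
    G'.Reachable (φ u) (φ v) := by
  obtain ⟨p⟩ := huv
  induction p with
  | nil => exact Reachable.refl _
  | cons hadj p ih =>
    rcases h _ _ hadj with he | ha
    · rw [he]; exact ih
    · exact (ha.reachable).trans ih

lemma not_reach_of_invariant {V α : Type*} {G : SimpleGraph V} (φ : V → α)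
    (h : ∀ u v, G.Adj u v → φ u = φ v) {u v : V} (hne : φ u ≠ φ v) : ¬ G.Reachable u v := by
  intro hr
  obtain ⟨p⟩ := hr
  refine hne ?_
  clear hne
  induction p with
  | nil => rfl
  | cons hadj p ih => rw [h _ _ hadj]; exact ih

lemma reach_induce_map {V V' : Type*} {G : SimpleGraph V} {G' : SimpleGraph V'}
    {W : Set V} {W' : Set V'} (φ : V → V') (hW : ∀ v ∈ W, φ v ∈ W')
    (hadj : ∀ u v, u ∈ W → v ∈ W → G.Adj u v → G'.Adj (φ u) (φ v))
    {u v : V} (hu : u ∈ W) (hv : v ∈ W)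
    (h : (G.induce W).Reachable ⟨u, hu⟩ ⟨v, hv⟩) :
    (G'.induce W').Reachable ⟨φ u, hW u hu⟩ ⟨φ v, hW v hv⟩ := by
  have := reach_of_pseudo_hom (G := G.induce W) (G' := G'.induce W')
    (φ := fun x => (⟨φ x.1, hW x.1 x.2⟩ : W')) ?_ h
  · exact this
  · rintro ⟨x, hx⟩ ⟨y, hy⟩ hxy
    right
    exact hadj x y hx hy hxy

def GlueRel {T S ι : Type} (tT : SimpleGraph T) (sT : SimpleGraph S)
    (f : ι → T) (r : ι → S) : (T ⊕ ι × S) → (T ⊕ ι × S) → Prop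
  | Sum.inl t, Sum.inl t' => tT.Adj t t'
  | Sum.inl t, Sum.inr (i, s) => t = f i ∧ s = r i
  | Sum.inr (i, s), Sum.inr (j, s') => i = j ∧ sT.Adj s s'
  | _, _ => False

def Glue {T S ι : Type} (tT : SimpleGraph T) (sT : SimpleGraph S)
    (f : ι → T) (r : ι → S) : SimpleGraph (T ⊕ ι × S) :=
  SimpleGraph.fromRel (GlueRel tT sT f r)

variable {T S ι : Type} {tT : SimpleGraph T} {sT : SimpleGraph S} {f : ι → T} {r : ι → S}

lemma glue_adj_inl_inl {t t' : T} : (Glue tT sT f r).Adj (Sum.inl t) (Sum.inl t') ↔ tT.Adj t t' := by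
  constructor
  · rintro ⟨hne, h | h⟩ <;> first | exact h | exact h.symm
  · intro h; exact ⟨by simp [h.ne], Or.inl h⟩

lemma glue_adj_inr_inr {i j : ι} {s s' : S} :
    (Glue tT sT f r).Adj (Sum.inr (i, s)) (Sum.inr (j, s')) ↔ i = j ∧ sT.Adj s s' := by
  constructor
  · rintro ⟨hne, ⟨rfl, h⟩ | ⟨rfl, h⟩⟩ <;> exact ⟨rfl, by first | exact h | exact h.symm⟩
  · rintro ⟨rfl, h⟩; exact ⟨by simp [h.ne], Or.inl ⟨rfl, h⟩⟩

lemma glue_adj_inl_inr {t : T} {i : ι} {s : S} :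
    (Glue tT sT f r).Adj (Sum.inl t) (Sum.inr (i, s)) ↔ t = f i ∧ s = r i := by
  constructor
  · rintro ⟨hne, h | h⟩
    · exact h
    · exact absurd h id
  · rintro ⟨rfl, rfl⟩; exact ⟨by simp, Or.inl ⟨rfl, rfl⟩⟩

lemma glue_attach_adj (i : ι) : (Glue tT sT f r).Adj (Sum.inl (f i)) (Sum.inr (i, r i)) :=
  glue_adj_inl_inr.2 ⟨rfl, rfl⟩

lemma glue_connected (hT : tT.Connected) (hS : sT.Connected) : (Glue tT sT f r).Connected := by
  have hlift : ∀ t t' : T, (Glue tT sT f r).Reachable (Sum.inl t) (Sum.inl t') := by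
    intro t t'
    exact reach_of_pseudo_hom (φ := Sum.inl) (fun u v h => Or.inr (glue_adj_inl_inl.2 h)) (hT t t')
  have hbase : ∀ x : T ⊕ ι × S, ∃ t, (Glue tT sT f r).Reachable x (Sum.inl t) := by
    rintro (t | ⟨i, s⟩)
    · exact ⟨t, Reachable.refl _⟩
    · refine ⟨f i, ?_⟩
      have h1 : (Glue tT sT f r).Reachable (Sum.inr (i, s)) (Sum.inr (i, r i)) :=
        reach_of_pseudo_hom (φ := fun s => Sum.inr (i, s))
          (fun u v h => Or.inr (glue_adj_inr_inr.2 ⟨rfl, h⟩)) (hS s (r i))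
      exact h1.trans (glue_attach_adj i).symm.reachable
  have : Nonempty (T ⊕ ι × S) := ⟨Sum.inl hT.nonempty.some⟩
  rw [SimpleGraph.connected_iff]
  refine ⟨fun x y => ?_, this⟩
  obtain ⟨t, hx⟩ := hbase x
  obtain ⟨t', hy⟩ := hbase y
  exact (hx.trans (hlift t t')).trans hy.symm

section
variable {T S ι : Type} {tT : SimpleGraph T} {sT : SimpleGraph S} {f : ι → T} {r : ι → S}

lemma glue_isTree (hT : tT.IsTree) (hS : sT.IsTree) : (Glue tT sT f r).IsTree := by
  classical
  constructor
  · exact glue_connected hT.isConnected hS.isConnected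
  · rw [isAcyclic_iff_forall_adj_isBridge]
    rintro (t | ⟨i, s⟩) (t' | ⟨i', s'⟩) hadj
    · -- inl-inl
      have htt' : tT.Adj t t' := glue_adj_inl_inl.1 hadj
      have hbr : ¬(tT \ fromEdgeSet {s(t, t')}).Reachable t t' :=
        (isBridge_iff.1 (isAcyclic_iff_forall_adj_isBridge.1 hT.IsAcyclic htt'))
      rw [isBridge_iff]
      refine fun hr => hbr ?_
      refine reach_of_pseudo_hom (φ := Sum.elim id (fun p => f p.1)) ?_ hr
      rintro (u | ⟨j, x⟩) (v | ⟨j', y⟩) ⟨hg, hne⟩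
      · right
        refine ⟨glue_adj_inl_inl.1 hg, ?_⟩
        rw [fromEdgeSet_adj]
        rintro ⟨he, hne'⟩
        exact hne (by rw [fromEdgeSet_adj]; constructor <;> simp_all [Sym2.eq_iff])
      · left; simp [(glue_adj_inl_inr.1 hg).1]
      · left; simp [(glue_adj_inl_inr.1 hg.symm).1]
      · left; simp [(glue_adj_inr_inr.1 hg).1]
    · -- inl-inr : attach edge
      obtain ⟨rfl, rfl⟩ := glue_adj_inl_inr.1 hadj
      rw [isBridge_iff]
      refine fun hr => ?_
      have := not_reach_of_invariant (G := (Glue tT sT f r) \ fromEdgeSet {s(Sum.inl (f i'), Sum.inr (i', r i'))})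
        (φ := fun x => match x with | Sum.inr (j, _) => (j = i' : Prop) | Sum.inl _ => False) ?_ ?_ hr
      · exact this
      · rintro (u | ⟨j, x⟩) (v | ⟨j', y⟩) ⟨hg, hne⟩
        · rfl
        · obtain ⟨rfl, rfl⟩ := glue_adj_inl_inr.1 hg
          simp only [eq_iff_iff, false_iff]
          rintro rfl
          exact hne (by rw [fromEdgeSet_adj]; refine ⟨?_, by simp⟩; first | rfl | exact Set.mem_singleton_iff.2 Sym2.eq_swap)
        · obtain ⟨rfl, rfl⟩ := glue_adj_inl_inr.1 hg.symm
          simp only [eq_iff_iff, iff_false]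
          rintro rfl
          exact hne (by rw [fromEdgeSet_adj]; refine ⟨?_, by simp⟩; first | rfl | exact Set.mem_singleton_iff.2 Sym2.eq_swap)
        · obtain ⟨rfl, -⟩ := glue_adj_inr_inr.1 hg
          rfl
      · simp
    · -- inr-inl : attach edge, symmetric
      obtain ⟨rfl, rfl⟩ := glue_adj_inl_inr.1 hadj.symm
      rw [isBridge_iff]
      refine fun hr => ?_
      have := not_reach_of_invariant (G := (Glue tT sT f r) \ fromEdgeSet {s(Sum.inr (i, r i), Sum.inl (f i))})
        (φ := fun x => match x with | Sum.inr (j, _) => (j = i : Prop) | Sum.inl _ => False) ?_ ?_ hr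
      · exact this
      · rintro (u | ⟨j, x⟩) (v | ⟨j', y⟩) ⟨hg, hne⟩
        · rfl
        · obtain ⟨rfl, rfl⟩ := glue_adj_inl_inr.1 hg
          simp only [eq_iff_iff, false_iff]
          rintro rfl
          exact hne (by rw [fromEdgeSet_adj]; refine ⟨?_, by simp⟩; first | rfl | exact Set.mem_singleton_iff.2 Sym2.eq_swap)
        · obtain ⟨rfl, rfl⟩ := glue_adj_inl_inr.1 hg.symm
          simp only [eq_iff_iff, iff_false]
          rintro rfl
          exact hne (by rw [fromEdgeSet_adj]; refine ⟨?_, by simp⟩; first | rfl | exact Set.mem_singleton_iff.2 Sym2.eq_swap)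
        · obtain ⟨rfl, -⟩ := glue_adj_inr_inr.1 hg
          rfl
      · simp
    · -- inr-inr : copy edge
      obtain ⟨rfl, hss'⟩ := glue_adj_inr_inr.1 hadj
      have hbr : ¬(sT \ fromEdgeSet {s(s, s')}).Reachable s s' :=
        (isBridge_iff.1 (isAcyclic_iff_forall_adj_isBridge.1 hS.IsAcyclic hss'))
      rw [isBridge_iff]
      refine fun hr => hbr ?_
      have := reach_of_pseudo_hom
        (φ := fun x => match x with | Sum.inr (j, u) => if j = i then u else r i | Sum.inl _ => r i)
        (G' := sT \ fromEdgeSet {s(s, s')}) ?_ hr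
      · simpa using this
      · rintro (u | ⟨j, x⟩) (v | ⟨j', y⟩) ⟨hg, hne⟩
        · left; rfl
        · obtain ⟨rfl, rfl⟩ := glue_adj_inl_inr.1 hg
          left
          by_cases h : j' = i <;> simp [h]
        · obtain ⟨rfl, rfl⟩ := glue_adj_inl_inr.1 hg.symm
          left
          by_cases h : j = i <;> simp [h]
        · obtain ⟨rfl, hxy⟩ := glue_adj_inr_inr.1 hg
          by_cases h : j = i
          · subst h
            right
            simp only [if_pos rfl, if_true]
            refine ⟨hxy, ?_⟩
            rw [fromEdgeSet_adj]
            rintro ⟨he, -⟩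
            rw [Set.mem_singleton_iff] at he
            (try simp only [if_pos rfl, if_true] at he)
            refine hne ?_
            rw [fromEdgeSet_adj]
            refine ⟨?_, by simp [hxy.ne]⟩
            rw [Set.mem_singleton_iff]
            have h1 : s(Sum.inr (j, x), Sum.inr (j, y)) =
                Sym2.map (fun u => (Sum.inr (j, u) : T ⊕ ι × S)) s(x, y) := rfl
            have h2 : s(Sum.inr (j, s), (Sum.inr (j, s') : T ⊕ ι × S)) =
                Sym2.map (fun u => (Sum.inr (j, u) : T ⊕ ι × S)) s(s, s') := rfl
            rw [h1, h2, he]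
          · left; simp [h]

end

lemma treewidthLE_card {V : Type} [Fintype V] (G : SimpleGraph V) :
    TreewidthLE G (Fintype.card V) := by
  refine ⟨Unit, ⊥, fun _ => Set.univ, ⟨⟨?_, ?_⟩, fun v => ⟨(), trivial⟩,
    fun u v _ => ⟨(), trivial, trivial⟩, fun v => ?_⟩, fun t => ?_⟩
  · rw [connected_iff]
    exact ⟨fun u v => by rw [Subsingleton.elim u v], ⟨()⟩⟩
  · exact isAcyclic_bot
  · rw [connected_iff]
    exact ⟨fun u v => by rw [Subsingleton.elim u v], ⟨⟨(), trivial⟩⟩⟩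
  · rw [Set.ncard_univ, Nat.card_eq_fintype_card]
    omega

lemma treewidth_exists_eq {V : Type} [Fintype V] (G : SimpleGraph V) :
    ∃ w : ℕ, TreewidthLE G w ∧ treewidth G = (w : ℕ∞) := by
  have hne : Fintype.card V ∈ {w : ℕ | TreewidthLE G w} := treewidthLE_card G
  set P := {w : ℕ | TreewidthLE G w}
  have hPne : P.Nonempty := ⟨_, hne⟩
  refine ⟨sInf P, Nat.sInf_mem hPne, le_antisymm ?_ ?_⟩
  · exact sInf_le ⟨sInf P, Nat.sInf_mem hPne, rfl⟩
  · refine le_sInf ?_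
    rintro x ⟨w, hw, rfl⟩
    simpa using (Nat.cast_le (α := ℕ∞)).2 (Nat.sInf_le hw)

lemma treewidth_le_of_le {V : Type} (G : SimpleGraph V) (w : ℕ) (h : TreewidthLE G w) :
    treewidth G ≤ (w : ℕ∞) :=
  sInf_le ⟨w, h, rfl⟩

section Bags

variable {VG VH : Type} {A B : Set VH} {a b : VH} {D : VG → VG → Prop}

noncomputable def phiV (A : Set VH) (a : VH) (B : Set VH) (D : VG → VG → Prop) (v : VG) (x : VH) :
    VG ⊕ (VG × {x : VH // x ∈ A ∧ x ≠ a}) ⊕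
      ({p : VG × VG // D p.1 p.2} × {x : VH // x ∈ B ∧ x ≠ a ∧ x ≠ b}) := by
  classical
  exact if h : x ∈ A ∧ x ≠ a then Sum.inr (Sum.inl (v, ⟨x, h⟩)) else Sum.inl v

noncomputable def phiE (A : Set VH) (a b : VH) (B : Set VH) (D : VG → VG → Prop)
    (p : {p : VG × VG // D p.1 p.2}) (x : VH) :
    VG ⊕ (VG × {x : VH // x ∈ A ∧ x ≠ a}) ⊕
      ({p : VG × VG // D p.1 p.2} × {x : VH // x ∈ B ∧ x ≠ a ∧ x ≠ b}) := by
  classical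
  exact if h : x ∈ B ∧ x ≠ a ∧ x ≠ b then Sum.inr (Sum.inr (p, ⟨x, h⟩))
    else if x = a then Sum.inl p.val.1 else Sum.inl p.val.2

lemma phiV_inl_mem (haA : a ∈ A) (v u : VG) (s : Set VH) :
    (Sum.inl u ∈ phiV (b := b) A a B D v '' (s ∩ A)) ↔ u = v ∧ a ∈ s := by
  classical
  constructor
  · rintro ⟨x, ⟨hxs, hxA⟩, hx⟩
    unfold phiV at hx
    split at hx
    · simp at hx
    · next h =>
      have hxa : x = a := by
        by_contra hne
        exact h ⟨hxA, hne⟩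
      cases hx
      exact ⟨rfl, hxa ▸ hxs⟩
  · rintro ⟨rfl, has⟩
    refine ⟨a, ⟨has, haA⟩, ?_⟩
    unfold phiV
    rw [dif_neg]
    rintro ⟨-, h⟩
    exact h rfl

lemma phiV_inr_mem (v v' : VG) (y : {x : VH // x ∈ A ∧ x ≠ a}) (s : Set VH) :
    (Sum.inr (Sum.inl (v', y)) ∈ phiV (b := b) A a B D v '' (s ∩ A)) ↔ v' = v ∧ y.val ∈ s := by
  classical
  constructor
  · rintro ⟨x, ⟨hxs, hxA⟩, hx⟩
    unfold phiV at hx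
    split at hx
    · rw [Sum.inr.injEq, Sum.inl.injEq, Prod.mk.injEq] at hx
      obtain ⟨rfl, hy⟩ := hx
      refine ⟨rfl, ?_⟩
      rw [← hy]
      exact hxs
    · simp at hx
  · rintro ⟨rfl, hys⟩
    refine ⟨y.val, ⟨hys, y.2.1⟩, ?_⟩
    unfold phiV
    rw [dif_pos y.2]

lemma phiV_inr2_not_mem (v : VG) (z) (s : Set VH) :
    (Sum.inr (Sum.inr z) ∉ phiV (b := b) A a B D v '' (s ∩ A)) := by
  classical
  rintro ⟨x, -, hx⟩
  unfold phiV at hx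
  split at hx <;> simp at hx

lemma phiE_inl_mem (hab : a ≠ b) (haB : a ∈ B) (hbB : b ∈ B)
    (p : {p : VG × VG // D p.1 p.2}) (u : VG) (s : Set VH) :
    (Sum.inl u ∈ phiE A a b B D p '' (s ∩ B)) ↔
      (u = p.val.1 ∧ a ∈ s) ∨ (u = p.val.2 ∧ b ∈ s) := by
  classical
  constructor
  · rintro ⟨x, ⟨hxs, hxB⟩, hx⟩
    unfold phiE at hx
    split at hx
    · simp at hx
    · next h =>
      push_neg at h
      split at hx
      · next hxa =>
        cases hx
        exact Or.inl ⟨rfl, hxa ▸ hxs⟩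
      · next hxa =>
        have hxb : x = b := h hxB hxa
        cases hx
        exact Or.inr ⟨rfl, hxb ▸ hxs⟩
  · rintro (⟨rfl, has⟩ | ⟨rfl, hbs⟩)
    · refine ⟨a, ⟨has, haB⟩, ?_⟩
      unfold phiE
      rw [dif_neg (by rintro ⟨-, h, -⟩; exact h rfl), if_pos rfl]
    · refine ⟨b, ⟨hbs, hbB⟩, ?_⟩
      unfold phiE
      rw [dif_neg (by rintro ⟨-, -, h⟩; exact h rfl), if_neg (Ne.symm hab)]

lemma phiE_inr_mem (p p' : {p : VG × VG // D p.1 p.2})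
    (y : {x : VH // x ∈ B ∧ x ≠ a ∧ x ≠ b}) (s : Set VH) :
    (Sum.inr (Sum.inr (p', y)) ∈ phiE A a b B D p '' (s ∩ B)) ↔
      p' = p ∧ y.val ∈ s := by
  classical
  constructor
  · rintro ⟨x, ⟨hxs, hxB⟩, hx⟩
    unfold phiE at hx
    split at hx
    · rw [Sum.inr.injEq, Sum.inr.injEq, Prod.mk.injEq] at hx
      obtain ⟨rfl, hy⟩ := hx
      exact ⟨rfl, by rw [← hy]; exact hxs⟩
    · split at hx <;> simp at hx
  · rintro ⟨rfl, hys⟩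
    refine ⟨y.val, ⟨hys, y.2.1⟩, ?_⟩
    unfold phiE
    rw [dif_pos y.2]

lemma phiE_inr1_not_mem (p : {p : VG × VG // D p.1 p.2}) (z) (s : Set VH) :
    (Sum.inr (Sum.inl z) ∉ phiE A a b B D p '' (s ∩ B)) := by
  classical
  rintro ⟨x, -, hx⟩
  unfold phiE at hx
  split at hx
  · simp at hx
  · split at hx <;> simp at hx

lemma inl_not_mem_inl_image (z) (s : Set VG) :
    (Sum.inr z ∉ (Sum.inl : VG → VG ⊕ (VG × {x : VH // x ∈ A ∧ x ≠ a}) ⊕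
      ({p : VG × VG // p ∈ {p : VG × VG | D p.1 p.2}} × {x : VH // x ∈ B ∧ x ≠ a ∧ x ≠ b})) '' s) := by
  rintro ⟨x, -, hx⟩
  simp at hx

end Bags

lemma connected_of_reach_base {V : Type*} (G : SimpleGraph V) (base : V)
    (h : ∀ x, G.Reachable x base) : G.Connected := by
  rw [SimpleGraph.connected_iff]
  exact ⟨fun x y => (h x).trans (h y).symm, ⟨base⟩⟩

lemma induce_adj_reachable {V : Type*} {G : SimpleGraph V} {W : Set V} {x y : V}
    (hx : x ∈ W) (hy : y ∈ W) (h : G.Adj x y) :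
    (G.induce W).Reachable ⟨x, hx⟩ ⟨y, hy⟩ := by
  refine SimpleGraph.Adj.reachable ?_
  exact h

noncomputable def Bags {VG VH TG TH : Type} (A : Set VH) (a b : VH) (B : Set VH)
    (D : VG → VG → Prop) (XG : TG → Set VG) (XH : TH → Set VH) :
    TG ⊕ (VG ⊕ {p : VG × VG // D p.1 p.2}) × TH →
      Set (VG ⊕ (VG × {x : VH // x ∈ A ∧ x ≠ a}) ⊕
        ({p : VG × VG // D p.1 p.2} × {x : VH // x ∈ B ∧ x ≠ a ∧ x ≠ b}))
  | Sum.inl t => Sum.inl '' XG t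
  | Sum.inr (Sum.inl v, t) => phiV A a B D v '' (XH t ∩ A)
  | Sum.inr (Sum.inr p, t) => phiE A a b B D p '' (XH t ∩ B)

/-- Let `a, b` be adjacent vertices of `H`, `A` an induced subgraph of `H` containing
`a`, and `B` a block of `H` containing `a` and `b`. Let `G'` be obtained from `G` by
attaching a copy of `A` at every vertex (identifying it with `a`) and replacing every
edge by a copy of `B` (identifying the endpoints with `a` and `b`). Then
`tw(G') ≤ max (tw G) (tw H)`. -/
theorem stmt16 {VG VH : Type} [Fintype VG] [Fintype VH]
    (G : SimpleGraph VG) (H : SimpleGraph VH)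
    (a b : VH) (hab : H.Adj a b)
    (A B : Set VH) (haA : a ∈ A)
    (hB : IsBlockSet H B) (haB : a ∈ B) (hbB : b ∈ B)
    (D : VG → VG → Prop)
    (hD : ∀ u v, G.Adj u v ↔ (D u v ∨ D v u))
    (hasym : ∀ u v, D u v → ¬ D v u) :
    treewidth (SimpleGraph.fromRel (GadgetRel G H a b A B D)) ≤
      max (treewidth G) (treewidth H) := by
  classical
  obtain ⟨wG, hWG, htwG⟩ := treewidth_exists_eq G
  obtain ⟨wH, hWH, htwH⟩ := treewidth_exists_eq H
  rw [htwG, htwH]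
  have hcast : ((max wG wH : ℕ) : ℕ∞) = max (wG : ℕ∞) (wH : ℕ∞) := by
    rcases le_total wG wH with h | h <;>
      simp [max_eq_right h, max_eq_left h,
        max_eq_right ((Nat.cast_le (α := ℕ∞)).2 h), max_eq_left ((Nat.cast_le (α := ℕ∞)).2 h)]
  refine le_trans (treewidth_le_of_le _ _ ?_) (le_of_eq hcast)
  obtain ⟨TG, tG, XG, ⟨htreeG, hcovG, hedgG, hconG⟩, hsizeG⟩ := hWG
  obtain ⟨TH, tH, XH, ⟨htreeH, hcovH, hedgH, hconH⟩, hsizeH⟩ := hWH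
  obtain ⟨rab, hrab_a, hrab_b⟩ := hedgH a b hab
  choose fv hfv using hcovG
  have hedgeP : ∀ p : {p : VG × VG // D p.1 p.2}, ∃ t, p.val.1 ∈ XG t ∧ p.val.2 ∈ XG t :=
    fun p => hedgG _ _ ((hD _ _).2 (Or.inl p.2))
  choose fe hfe1 hfe2 using hedgeP
  refine ⟨TG ⊕ (VG ⊕ {p : VG × VG // D p.1 p.2}) × TH,
    Glue tG tH (Sum.elim fv fe) (fun _ => rab), Bags A a b B D XG XH,
    ⟨glue_isTree htreeG htreeH, ?_, ?_, ?_⟩, ?_⟩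
  · -- vertex cover
    rintro (v | ⟨v, x⟩ | ⟨p, x⟩)
    · exact ⟨Sum.inl (fv v), v, hfv v, rfl⟩
    · obtain ⟨t, ht⟩ := hcovH x.val
      exact ⟨Sum.inr (Sum.inl v, t), (phiV_inr_mem v v x (XH t)).2 ⟨rfl, ht⟩⟩
    · obtain ⟨t, ht⟩ := hcovH x.val
      exact ⟨Sum.inr (Sum.inr p, t), (phiE_inr_mem p p x (XH t)).2 ⟨rfl, ht⟩⟩
  · -- edge cover
    have hGad : ∀ u v, GadgetRel G H a b A B D u v →
        ∃ node, u ∈ Bags A a b B D XG XH node ∧ v ∈ Bags A a b B D XG XH node := by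
      rintro (u | ⟨v, x⟩ | ⟨p, x⟩) (u' | ⟨v', y⟩ | ⟨p', y⟩) h <;>
        simp only [GadgetRel] at h
      · -- inl inl
        rcases (hD u u').1 h.1 with hd | hd
        · refine ⟨Sum.inr (Sum.inr ⟨(u, u'), hd⟩, rab), ?_, ?_⟩
          · exact (phiE_inl_mem hab.ne haB hbB _ u (XH rab)).2 (Or.inl ⟨rfl, hrab_a⟩)
          · exact (phiE_inl_mem hab.ne haB hbB _ u' (XH rab)).2 (Or.inr ⟨rfl, hrab_b⟩)
        · refine ⟨Sum.inr (Sum.inr ⟨(u', u), hd⟩, rab), ?_, ?_⟩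
          · exact (phiE_inl_mem hab.ne haB hbB _ u (XH rab)).2 (Or.inr ⟨rfl, hrab_b⟩)
          · exact (phiE_inl_mem hab.ne haB hbB _ u' (XH rab)).2 (Or.inl ⟨rfl, hrab_a⟩)
      · -- inl, vertex copy
        obtain ⟨heq, hadj'⟩ := h
        obtain ⟨t, h1, h2⟩ := hedgH _ _ hadj'
        refine ⟨Sum.inr (Sum.inl v', t), ?_, ?_⟩
        · exact (phiV_inl_mem haA v' u (XH t)).2 ⟨heq, h1⟩
        · exact (phiV_inr_mem v' v' y (XH t)).2 ⟨rfl, h2⟩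
      · -- inl, edge copy
        rcases h with ⟨heq, hadj'⟩ | ⟨heq, hadj'⟩
        · obtain ⟨t, h1, h2⟩ := hedgH _ _ hadj'
          refine ⟨Sum.inr (Sum.inr p', t), ?_, ?_⟩
          · exact (phiE_inl_mem hab.ne haB hbB _ u (XH t)).2 (Or.inl ⟨heq, h1⟩)
          · exact (phiE_inr_mem p' p' y (XH t)).2 ⟨rfl, h2⟩
        · obtain ⟨t, h1, h2⟩ := hedgH _ _ hadj'
          refine ⟨Sum.inr (Sum.inr p', t), ?_, ?_⟩
          · exact (phiE_inl_mem hab.ne haB hbB _ u (XH t)).2 (Or.inr ⟨heq, h1⟩)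
          · exact (phiE_inr_mem p' p' y (XH t)).2 ⟨rfl, h2⟩
      · -- vertex copy, vertex copy
        obtain ⟨heq, hadj'⟩ := h
        obtain ⟨t, h1, h2⟩ := hedgH _ _ hadj'
        refine ⟨Sum.inr (Sum.inl v, t), ?_, ?_⟩
        · exact (phiV_inr_mem v v x (XH t)).2 ⟨rfl, h1⟩
        · exact (phiV_inr_mem v v' y (XH t)).2 ⟨heq.symm, h2⟩
      · -- edge copy, edge copy
        obtain ⟨heq, hadj'⟩ := h
        obtain ⟨t, h1, h2⟩ := hedgH _ _ hadj'
        refine ⟨Sum.inr (Sum.inr p, t), ?_, ?_⟩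
        · exact (phiE_inr_mem p p x (XH t)).2 ⟨rfl, h1⟩
        · exact (phiE_inr_mem p p' y (XH t)).2 ⟨heq.symm, h2⟩
    intro u v hadj
    rw [SimpleGraph.fromRel_adj] at hadj
    obtain ⟨-, h | h⟩ := hadj
    · exact hGad _ _ h
    · obtain ⟨node, h1, h2⟩ := hGad _ _ h
      exact ⟨node, h2, h1⟩
  · -- connected subtrees
    rintro (v | ⟨v, x⟩ | ⟨p, x⟩)
    · -- vertex inl v
      have hbase : (Sum.inl (fv v) : TG ⊕ (VG ⊕ {p : VG × VG // D p.1 p.2}) × TH) ∈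
          {node | Sum.inl v ∈ Bags A a b B D XG XH node} := ⟨v, hfv v, rfl⟩
      apply connected_of_reach_base _ ⟨_, hbase⟩
      have hreachG : ∀ (t : TG) (hvt : v ∈ XG t),
          ((Glue tG tH (Sum.elim fv fe) (fun _ => rab)).induce
            {node | Sum.inl v ∈ Bags A a b B D XG XH node}).Reachable
            ⟨Sum.inl t, ⟨v, hvt, rfl⟩⟩ ⟨Sum.inl (fv v), hbase⟩ := by
        intro t hvt
        exact reach_induce_map (G := tG) (W := {t | v ∈ XG t}) Sum.inl
          (W' := {node | Sum.inl v ∈ Bags A a b B D XG XH node})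
          (fun t' ht' => ⟨v, ht', rfl⟩)
          (fun u u' _ _ h => glue_adj_inl_inl.2 h) hvt (hfv v)
          ((hconG v).preconnected ⟨t, hvt⟩ ⟨fv v, hfv v⟩)
      rintro ⟨(t | ⟨(v0 | p), t⟩), hnode⟩
      · have hvt : v ∈ XG t := by
          obtain ⟨u, hu, huv⟩ := hnode
          cases huv
          exact hu
        exact hreachG t hvt
      · obtain ⟨heq, hat⟩ := (phiV_inl_mem haA v0 v (XH t)).1 hnode
        subst heq
        have hmap : ∀ t' ∈ {t' : TH | a ∈ XH t'},
            (Sum.inr (Sum.inl v, t') : TG ⊕ (VG ⊕ {p : VG × VG // D p.1 p.2}) × TH) ∈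
              {node | Sum.inl v ∈ Bags A a b B D XG XH node} :=
          fun t' ht' => (phiV_inl_mem haA v v (XH t')).2 ⟨rfl, ht'⟩
        have r1 := reach_induce_map (G := tH) (G' := Glue tG tH (Sum.elim fv fe) (fun _ => rab)) (W := {t' : TH | a ∈ XH t'})
          (fun t' => Sum.inr (Sum.inl v, t')) hmap
          (fun u u' _ _ h => glue_adj_inr_inr.2 ⟨rfl, h⟩) hat hrab_a
          ((hconH a).preconnected ⟨t, hat⟩ ⟨rab, hrab_a⟩)
        refine r1.trans (induce_adj_reachable (hmap rab hrab_a) hbase ?_)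
        exact (glue_attach_adj (Sum.inl v)).symm
      · rcases (phiE_inl_mem hab.ne haB hbB p v (XH t)).1 hnode with ⟨hv1, hat⟩ | ⟨hv2, hbt⟩
        · have hmap : ∀ t' ∈ {t' : TH | a ∈ XH t'},
              (Sum.inr (Sum.inr p, t') : TG ⊕ (VG ⊕ {p : VG × VG // D p.1 p.2}) × TH) ∈
                {node | Sum.inl v ∈ Bags A a b B D XG XH node} :=
            fun t' ht' => (phiE_inl_mem hab.ne haB hbB p v (XH t')).2 (Or.inl ⟨hv1, ht'⟩)
          have r1 := reach_induce_map (G := tH) (G' := Glue tG tH (Sum.elim fv fe) (fun _ => rab)) (W := {t' : TH | a ∈ XH t'})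
            (fun t' => Sum.inr (Sum.inr p, t')) hmap
            (fun u u' _ _ h => glue_adj_inr_inr.2 ⟨rfl, h⟩) hat hrab_a
            ((hconH a).preconnected ⟨t, hat⟩ ⟨rab, hrab_a⟩)
          have hvfe : v ∈ XG (fe p) := hv1 ▸ hfe1 p
          have hfeW : (Sum.inl (fe p) : TG ⊕ (VG ⊕ {p : VG × VG // D p.1 p.2}) × TH) ∈
              {node | Sum.inl v ∈ Bags A a b B D XG XH node} := ⟨v, hvfe, rfl⟩
          refine (r1.trans (induce_adj_reachable (hmap rab hrab_a) hfeW ?_)).trans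
            (hreachG (fe p) hvfe)
          exact (glue_attach_adj (Sum.inr p)).symm
        · have hmap : ∀ t' ∈ {t' : TH | b ∈ XH t'},
              (Sum.inr (Sum.inr p, t') : TG ⊕ (VG ⊕ {p : VG × VG // D p.1 p.2}) × TH) ∈
                {node | Sum.inl v ∈ Bags A a b B D XG XH node} :=
            fun t' ht' => (phiE_inl_mem hab.ne haB hbB p v (XH t')).2 (Or.inr ⟨hv2, ht'⟩)
          have r1 := reach_induce_map (G := tH) (G' := Glue tG tH (Sum.elim fv fe) (fun _ => rab)) (W := {t' : TH | b ∈ XH t'})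
            (fun t' => Sum.inr (Sum.inr p, t')) hmap
            (fun u u' _ _ h => glue_adj_inr_inr.2 ⟨rfl, h⟩) hbt hrab_b
            ((hconH b).preconnected ⟨t, hbt⟩ ⟨rab, hrab_b⟩)
          have hvfe : v ∈ XG (fe p) := hv2 ▸ hfe2 p
          have hfeW : (Sum.inl (fe p) : TG ⊕ (VG ⊕ {p : VG × VG // D p.1 p.2}) × TH) ∈
              {node | Sum.inl v ∈ Bags A a b B D XG XH node} := ⟨v, hvfe, rfl⟩
          refine (r1.trans (induce_adj_reachable (hmap rab hrab_b) hfeW ?_)).trans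
            (hreachG (fe p) hvfe)
          exact (glue_attach_adj (Sum.inr p)).symm
    · -- vertex in a vertex copy
      obtain ⟨t0, ht0⟩ := hcovH x.val
      have hbase : (Sum.inr (Sum.inl v, t0) : TG ⊕ (VG ⊕ {p : VG × VG // D p.1 p.2}) × TH) ∈
          {node | Sum.inr (Sum.inl (v, x)) ∈ Bags A a b B D XG XH node} :=
        (phiV_inr_mem v v x (XH t0)).2 ⟨rfl, ht0⟩
      apply connected_of_reach_base _ ⟨_, hbase⟩
      rintro ⟨(t | ⟨(v0 | p), t⟩), hnode⟩
      · exact absurd hnode (by rintro ⟨u, -, hu⟩; simp at hu)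
      · obtain ⟨heq, hxt⟩ := (phiV_inr_mem v0 v x (XH t)).1 hnode
        subst heq
        exact reach_induce_map (G := tH) (W := {t' : TH | x.val ∈ XH t'})
          (fun t' => Sum.inr (Sum.inl v, t'))
          (fun t' ht' => (phiV_inr_mem v v x (XH t')).2 ⟨rfl, ht'⟩)
          (fun u u' _ _ h => glue_adj_inr_inr.2 ⟨rfl, h⟩) hxt ht0
          ((hconH x.val).preconnected ⟨t, hxt⟩ ⟨t0, ht0⟩)
      · exact absurd hnode (phiE_inr1_not_mem p _ (XH t))
    · -- vertex in an edge copy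
      obtain ⟨t0, ht0⟩ := hcovH x.val
      have hbase : (Sum.inr (Sum.inr p, t0) : TG ⊕ (VG ⊕ {p : VG × VG // D p.1 p.2}) × TH) ∈
          {node | Sum.inr (Sum.inr (p, x)) ∈ Bags A a b B D XG XH node} :=
        (phiE_inr_mem p p x (XH t0)).2 ⟨rfl, ht0⟩
      apply connected_of_reach_base _ ⟨_, hbase⟩
      rintro ⟨(t | ⟨(v0 | q), t⟩), hnode⟩
      · exact absurd hnode (by rintro ⟨u, -, hu⟩; simp at hu)
      · exact absurd hnode (phiV_inr2_not_mem v0 _ (XH t))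
      · obtain ⟨heq, hxt⟩ := (phiE_inr_mem q p x (XH t)).1 hnode
        subst heq
        exact reach_induce_map (G := tH) (W := {t' : TH | x.val ∈ XH t'})
          (fun t' => Sum.inr (Sum.inr p, t'))
          (fun t' ht' => (phiE_inr_mem p p x (XH t')).2 ⟨rfl, ht'⟩)
          (fun u u' _ _ h => glue_adj_inr_inr.2 ⟨rfl, h⟩) hxt ht0
          ((hconH x.val).preconnected ⟨t, hxt⟩ ⟨t0, ht0⟩)
  · -- width bound
    rintro (t | ⟨(v | p), t⟩)
    · show ((Sum.inl '' XG t : Set _)).ncard ≤ max wG wH + 1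
      rw [Set.ncard_image_of_injective _ Sum.inl_injective]
      exact le_trans (hsizeG t) (by omega)
    · show ((phiV A a B D v '' (XH t ∩ A))).ncard ≤ max wG wH + 1
      calc (phiV A a B D v '' (XH t ∩ A)).ncard ≤ (XH t ∩ A).ncard :=
            Set.ncard_image_le (Set.toFinite _)
        _ ≤ (XH t).ncard := Set.ncard_le_ncard Set.inter_subset_left (Set.toFinite _)
        _ ≤ wH + 1 := hsizeH t
        _ ≤ max wG wH + 1 := by omega
    · show ((phiE A a b B D p '' (XH t ∩ B))).ncard ≤ max wG wH + 1
      calc (phiE A a b B D p '' (XH t ∩ B)).ncard ≤ (XH t ∩ B).ncard :=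
            Set.ncard_image_le (Set.toFinite _)
        _ ≤ (XH t).ncard := Set.ncard_le_ncard Set.inter_subset_left (Set.toFinite _)
        _ ≤ wH + 1 := hsizeH t
        _ ≤ max wG wH + 1 := by omega
end
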